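/- arXiv:0907.4292 — 4 statements merged into one kernel-verified Lean document; each statement's English description precedes it below -/
import Mathlib

section
/- For all positive integers m and n, the Schur functions satisfy s_{(m^n)}·s_{(m^n)} = s_{(m^{n-1})}·s_{(m^{n+1})} + s_{((m-1)^n)}·s_{((m+1)^n)}, where (m^n) denotes the rectangular partition with n parts equal to m. -/
open MvPolynomial

/-- The `k`-th complete homogeneous symmetric function, as a free generator of the
ring of symmetric functions `Λ = ℤ[h₁, h₂, …]` (with `h₀ = 1` and `h_k = 0` for `k < 0`). -/
noncomputable def hh (k : ℤ) : MvPolynomial ℕ ℤ :=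
  if k < 0 then 0 else if k = 0 then 1 else MvPolynomial.X k.toNat

/-- The Schur function of the sequence `(f 0, f 1, …, f (n-1))`, defined by the
Jacobi–Trudi determinant `det (h_{λ_i - i + j})_{1 ≤ i,j ≤ n}`. -/
noncomputable def schurN (n : ℕ) (f : ℕ → ℕ) : MvPolynomial ℕ ℤ :=
  Matrix.det (Matrix.of fun i j : Fin n => hh ((f i : ℤ) - (i : ℕ) + (j : ℕ)))

/-- Schur function of a partition given as a list of its parts. -/
noncomputable def schurL (l : List ℕ) : MvPolynomial ℕ ℤ :=
  schurN l.length (fun i => l.getD i 0)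

/-!
The Jacobi–Trudi matrix of a rectangle `(m^n)` is the Toeplitz matrix `(h_{m + j - i})`. Deleting
its first or last row and column gives the matrix of `(m^(n-1))`, deleting the first row and last
column or vice versa gives those of `((m-1)^(n-1))` and `((m+1)^(n-1))`, and deleting both gives
that of `(m^(n-2))`. The identity is therefore the Desnanot–Jacobi (Dodgson condensation) identity
for this matrix, which in turn is Jacobi's theorem on the `2 × 2` minors of the adjugate.
-/

namespace Matrix

theorem submatrix_updateCol_single {m n α : Type*} [DecidableEq m] [DecidableEq n] [Zero α]
    [One α] (A : Matrix n n α) {f g : m → n} (hf : f.Injective) (hg : g.Injective) (j : m) :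
    (A.updateCol (g j) (Pi.single (f j) 1)).submatrix f g =
      (A.submatrix f g).updateCol j (Pi.single j 1) := by
  ext k l
  simp [updateCol_apply, hg.eq_iff, Pi.single_apply, hf.eq_iff]

section Fintype

variable {n R : Type*} [Fintype n] [DecidableEq n] [CommRing R]

theorem det_updateCol_updateCol_one {i j : n} (hij : i ≠ j) (u v : n → R) :
    det (((1 : Matrix n n R).updateCol i u).updateCol j v) = u i * v j - u j * v i := by
  -- a rank-two perturbation of `1`: Weinstein–Aronszajn turns it into a `2 × 2` determinant
  have hpert : ((1 : Matrix n n R).updateCol i u).updateCol j v =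
      1 + of (fun k t => ![u k - (1 : Matrix n n R) k i, v k - (1 : Matrix n n R) k j] t) *
        of (fun t l => ![(1 : Matrix n n R) i l, (1 : Matrix n n R) j l] t) := by
    ext k l
    rcases eq_or_ne l j with rfl | hlj
    · simp [mul_apply, Fin.sum_univ_two, one_apply, hij]
    rcases eq_or_ne l i with rfl | hli
    · simp [mul_apply, Fin.sum_univ_two, one_apply, hlj, hlj.symm]
    · simp [mul_apply, Fin.sum_univ_two, one_apply, hlj, hli, hlj.symm, hli.symm]
  rw [hpert, det_one_add_mul_comm, det_fin_two]
  simp [mul_apply, one_apply, hij, hij.symm, mul_comm]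

theorem mulVec_col_adjugate (A : Matrix n n R) (i : n) :
    A *ᵥ (adjugate A).col i = det A • Pi.single i 1 := by
  rw [← mulVec_single_one, mulVec_mulVec, mul_adjugate, smul_mulVec, one_mulVec]

theorem det_mul_adjugate_minor_two (A : Matrix n n R) {i j : n} (hij : i ≠ j) :
    det A * (adjugate A i i * adjugate A j j - adjugate A i j * adjugate A j i) =
      det A * (det A * det ((A.updateCol i (Pi.single i 1)).updateCol j (Pi.single j 1))) := by
  let C := ((1 : Matrix n n R).updateCol i ((adjugate A).col i)).updateCol j ((adjugate A).col j)
  calc det A * (adjugate A i i * adjugate A j j - adjugate A i j * adjugate A j i)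
      = det A * det C := by rw [det_updateCol_updateCol_one hij]; simp only [col_apply]; ring
    _ = det ((A.updateCol i (det A • Pi.single i 1)).updateCol j (det A • Pi.single j 1)) := by
      rw [← det_mul, mul_updateCol, mul_updateCol, Matrix.mul_one, mulVec_col_adjugate,
        mulVec_col_adjugate]
    _ = det A * (det A * det ((A.updateCol i (Pi.single i 1)).updateCol j (Pi.single j 1))) := by
      rw [det_updateCol_smul, updateCol_comm _ hij, det_updateCol_smul, updateCol_comm _ hij.symm]

theorem adjugate_minor_two (A : Matrix n n R) {i j : n} (hij : i ≠ j) :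
    adjugate A i i * adjugate A j j - adjugate A i j * adjugate A j i =
      det A * det ((A.updateCol i (Pi.single i 1)).updateCol j (Pi.single j 1)) := by
  -- `det A` can be cancelled for the generic matrix, whose determinant is a nonzerodivisor
  let f := MvPolynomial.aeval (R := ℤ) fun p : n × n => A p.1 p.2
  have hf : f.mapMatrix (mvPolynomialX n n ℤ) = A := mvPolynomialX_mapMatrix_aeval ℤ A
  have hgeneric := mul_left_cancel₀ (det_mvPolynomialX_ne_zero n ℤ)
    (det_mul_adjugate_minor_two (mvPolynomialX n n ℤ) hij)
  have hsingle (k : n) : f ∘ Pi.single k 1 = Pi.single k 1 := by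
    ext l
    simp [Pi.single_apply, apply_ite f]
  have hmapped := congrArg f hgeneric
  simp only [map_sub, map_mul, AlgHom.map_det] at hmapped
  rw [← hf, ← AlgHom.map_adjugate]
  simpa only [AlgHom.mapMatrix_apply, map_apply, map_updateCol, hsingle] using hmapped

theorem det_updateCol_single_self (A : Matrix n n R) (j : n) :
    det (A.updateCol j (Pi.single j 1)) = adjugate A j j := by
  rw [← det_transpose, ← updateRow_transpose, ← adjugate_apply, ← adjugate_transpose,
    transpose_apply]

end Fintype

section Fin

variable {R : Type*} [CommRing R] {n : ℕ}

theorem adjugate_fin_succ_zero_zero (A : Matrix (Fin (n + 1)) (Fin (n + 1)) R) :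
    adjugate A 0 0 = det (A.submatrix Fin.succ Fin.succ) := by
  simp [adjugate_fin_succ_eq_det_submatrix]

theorem adjugate_fin_succ_last_last (A : Matrix (Fin (n + 1)) (Fin (n + 1)) R) :
    adjugate A (Fin.last n) (Fin.last n) = det (A.submatrix Fin.castSucc Fin.castSucc) := by
  simp [adjugate_fin_succ_eq_det_submatrix, ← two_mul]

theorem desnanot_jacobi (A : Matrix (Fin (n + 2)) (Fin (n + 2)) R) :
    det (A.submatrix Fin.succ Fin.succ) * det (A.submatrix Fin.castSucc Fin.castSucc) -
        det (A.submatrix Fin.succ Fin.castSucc) * det (A.submatrix Fin.castSucc Fin.succ) =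
      det A * det (A.submatrix (Fin.castSucc ∘ Fin.succ) (Fin.castSucc ∘ Fin.succ)) := by
  have h0L : (0 : Fin (n + 2)) ≠ Fin.last (n + 1) := (Fin.last_pos).ne
  have hcorner : det ((A.updateCol 0 (Pi.single 0 1)).updateCol (Fin.last (n + 1))
      (Pi.single (Fin.last (n + 1)) 1)) =
        det (A.submatrix (Fin.castSucc ∘ Fin.succ) (Fin.castSucc ∘ Fin.succ)) := by
    rw [det_updateCol_single_self, adjugate_fin_succ_last_last, ← Fin.castSucc_zero,
      submatrix_updateCol_single _ (Fin.castSucc_injective _) (Fin.castSucc_injective _),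
      det_updateCol_single_self, adjugate_fin_succ_zero_zero, submatrix_submatrix]
  rw [← hcorner, ← adjugate_minor_two A h0L, adjugate_fin_succ_zero_zero,
    adjugate_fin_succ_last_last, adjugate_fin_succ_eq_det_submatrix A 0,
    adjugate_fin_succ_eq_det_submatrix A (Fin.last _)]
  simp only [Fin.succAbove_zero, Fin.succAbove_last, Fin.val_zero, Fin.val_last]
  -- both off-diagonal corner entries of the adjugate carry the sign `(-1) ^ (n + 1)`
  ring_nf
  rw [pow_mul', neg_one_sq, one_pow, mul_one]

end Fin

end Matrix

open Matrix

section Toeplitz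

variable {R : Type*}

def toeplitzMatrix (g : ℤ → R) (k : ℕ) : Matrix (Fin k) (Fin k) R :=
  Matrix.of fun i j => g ((j : ℤ) - i)

theorem toeplitzMatrix_submatrix_succ_succ (g : ℤ → R) (k : ℕ) :
    (toeplitzMatrix g (k + 1)).submatrix Fin.succ Fin.succ = toeplitzMatrix g k := by
  ext i j
  simp [toeplitzMatrix]

theorem toeplitzMatrix_submatrix_castSucc_castSucc (g : ℤ → R) (k : ℕ) :
    (toeplitzMatrix g (k + 1)).submatrix Fin.castSucc Fin.castSucc = toeplitzMatrix g k := by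
  ext i j
  simp [toeplitzMatrix]

theorem toeplitzMatrix_submatrix_succ_castSucc (g : ℤ → R) (k : ℕ) :
    (toeplitzMatrix g (k + 1)).submatrix Fin.succ Fin.castSucc =
      toeplitzMatrix (fun d => g (d - 1)) k := by
  ext i j
  simp only [toeplitzMatrix, submatrix_apply, of_apply, Fin.val_succ, Fin.val_castSucc]
  push_cast
  ring_nf

theorem toeplitzMatrix_submatrix_castSucc_succ (g : ℤ → R) (k : ℕ) :
    (toeplitzMatrix g (k + 1)).submatrix Fin.castSucc Fin.succ =
      toeplitzMatrix (fun d => g (d + 1)) k := by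
  ext i j
  simp only [toeplitzMatrix, submatrix_apply, of_apply, Fin.val_succ, Fin.val_castSucc]
  push_cast
  ring_nf

theorem det_toeplitzMatrix_sq [CommRing R] (g : ℤ → R) (k : ℕ) :
    det (toeplitzMatrix g (k + 1)) ^ 2 =
      det (toeplitzMatrix g k) * det (toeplitzMatrix g (k + 2)) +
        det (toeplitzMatrix (fun d => g (d - 1)) (k + 1)) *
          det (toeplitzMatrix (fun d => g (d + 1)) (k + 1)) := by
  have h := desnanot_jacobi (toeplitzMatrix g (k + 2))
  simp only [← submatrix_submatrix, toeplitzMatrix_submatrix_succ_succ,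
    toeplitzMatrix_submatrix_castSucc_castSucc, toeplitzMatrix_submatrix_succ_castSucc,
    toeplitzMatrix_submatrix_castSucc_succ] at h
  linear_combination h

end Toeplitz

theorem schurN_const (k c : ℕ) :
    schurN k (fun _ => c) = det (toeplitzMatrix (fun d => hh (c + d)) k) := by
  unfold schurN toeplitzMatrix
  congr 2
  ext i j
  ring_nf

/-- For all positive integers `m`, `n`:
`s_{(m^n)} · s_{(m^n)} = s_{(m^{n-1})} · s_{(m^{n+1})} + s_{((m-1)^n)} · s_{((m+1)^n)}`. -/
theorem rectangular_schur_bilinear (m n : ℕ) (hm : 0 < m) (hn : 0 < n) :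
    schurN n (fun _ => m) * schurN n (fun _ => m) =
      schurN (n - 1) (fun _ => m) * schurN (n + 1) (fun _ => m) +
        schurN n (fun _ => m - 1) * schurN n (fun _ => m + 1) := by
  obtain ⟨k, rfl⟩ : ∃ k, n = k + 1 := Nat.exists_eq_add_one.mpr hn
  have hpred : (fun d : ℤ => hh (((m - 1 : ℕ) : ℤ) + d)) = fun d => hh (m + (d - 1)) := by
    funext d
    push_cast [Nat.cast_sub hm]
    ring_nf
  have hsucc : (fun d : ℤ => hh (((m + 1 : ℕ) : ℤ) + d)) = fun d => hh (m + (d + 1)) := by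
    funext d
    push_cast
    ring_nf
  rw [schurN_const, schurN_const, schurN_const, schurN_const, schurN_const, hpred, hsucc,
    Nat.add_sub_cancel, ← sq]
  exact det_toeplitzMatrix_sq (fun d => hh (m + d)) k
end

section
/- Dual Jacobi–Trudi identity: for any partition λ with λ₁ = m and any integer M ≥ m, s_λ = det(e_{λ'_i - i + j})_{1 ≤ i,j ≤ M}, where λ' is the conjugate partition and e_k is the k-th elementary symmetric function, with e_0 = 1 and e_k = 0 for k < 0. -/
open MvPolynomial

/-- The `k`-th elementary symmetric function, realized as the Schur function of the
column partition `(1^k)` (with `e₀ = 1` and `e_k = 0` for `k < 0`). -/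
noncomputable def ee (k : ℤ) : MvPolynomial ℕ ℤ :=
  if k < 0 then 0 else schurN k.toNat (fun _ => 1)

/-- The conjugate partition: `λ'_p = #{j : λ_j ≥ p}` (1-based, `lam` of height `n`). -/
def conjPart (n : ℕ) (lam : ℕ → ℕ) (p : ℕ) : ℕ :=
  ((List.range n).filter (fun j => p ≤ lam (j + 1))).length

/-!
With `N = n + M`, the upper triangular Toeplitz matrices `H = ((-1)^(j-i) h_{j-i})` and
`E = (e_{j-i})` of size `N` are mutually inverse, since `∑ₜ (-1)^t h_t e_{m-t} = δ_{m,0}` is the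
first-row expansion of the determinant defining `e_m`. The numbers `j + λ_{n-j}` (`j < n`) and
`n + i - λ'_{i+1}` (`i < M`) partition `[0, N)`, so Jacobi's complementary minor formula relates
the minor of `H` on rows `[0, n)` and the first set of columns, which is `(-1)^|λ| s_λ`, to the
complementary minor of `E`, which is the dual Jacobi–Trudi determinant. The sign of the
permutation is also `(-1)^|λ|`, as every cell of `λ` contributes exactly one inversion.
-/

open Matrix Finset Equiv

namespace Matrix

def toeplitz {R : Type*} (a : ℤ → R) (N : ℕ) : Matrix (Fin N) (Fin N) R :=
  of fun i j => a (j - i)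

variable {R : Type*} [CommRing R] {a b : ℤ → R}

theorem det_toeplitz_eq_one (ha : ∀ k < 0, a k = 0) (ha₀ : a 0 = 1) (N : ℕ) :
    (toeplitz a N).det = 1 := by
  rw [det_of_isUpperTriangular]
  · simp [toeplitz, ha₀]
  · intro i j hji
    exact ha _ (by simp only [id, Fin.lt_def] at hji; omega)

theorem toeplitz_mul_toeplitz_eq_one (ha : ∀ k < 0, a k = 0) (hb : ∀ k < 0, b k = 0)
    (hab : ∀ m : ℕ, ∑ t ∈ range (m + 1), a t * b (m - t : ℕ) = if m = 0 then 1 else 0)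
    (N : ℕ) : toeplitz a N * toeplitz b N = 1 := by
  ext i l
  rw [mul_apply, one_apply]
  simp only [toeplitz, of_apply]
  rw [Fin.sum_univ_eq_sum_range (fun k => a (k - i) * b (l - k)),
    ← sum_subset (s₁ := Ico (i : ℕ) (l + 1)) (fun k hk => by simp at hk ⊢; omega)]
  · rw [sum_Ico_eq_sum_range]
    rcases le_or_gt (i : ℕ) l with h | h
    · obtain ⟨d, hd⟩ := Nat.exists_eq_add_of_le h
      convert hab d using 1
      · refine sum_congr (by congr 1; omega) fun t ht => ?_
        rw [mem_range] at ht
        congr 2 <;> push_cast <;> omega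
      · simp [Fin.ext_iff, hd]
    · simp [Fin.ext_iff, show l + 1 - (i : ℕ) = 0 by omega, h.ne']
  · intro k _ hk
    rw [mem_Ico, not_and_or, not_le, not_lt] at hk
    rcases hk with hk | hk
    · rw [ha _ (by omega), zero_mul]
    · rw [hb _ (by omega), mul_zero]

theorem det_of_neg_one_pow_add_mul {N : ℕ} (X : Matrix (Fin N) (Fin N) R) :
    (of fun i j : Fin N => (-1) ^ ((i : ℕ) + (j : ℕ)) * X i j).det = X.det := by
  have h : (of fun i j : Fin N => (-1) ^ ((i : ℕ) + (j : ℕ)) * X i j) =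
      of fun i j : Fin N =>
        (-1) ^ (i : ℕ) * (of fun i j : Fin N => (-1) ^ (j : ℕ) * X i j) i j := by
    ext i j
    simp [pow_add, mul_assoc]
  rw [h, det_mul_column, det_mul_row, ← mul_assoc, ← prod_mul_distrib]
  simp [← pow_add, ← two_mul, pow_mul]

/-- Jacobi's complementary minor formula. -/
theorem det_submatrix_inl_of_mul_eq_one {ι α β : Type*} [Fintype ι] [DecidableEq ι]
    [Fintype α] [DecidableEq α] [Fintype β] [DecidableEq β]
    {A B : Matrix ι ι R} (hAB : A * B = 1) (e f : α ⊕ β ≃ ι) :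
    (A.submatrix (f ∘ Sum.inl) (e ∘ Sum.inl)).det =
      ((Perm.sign (e.trans f.symm) : ℤ) : R) * A.det *
        (B.submatrix (e ∘ Sum.inr) (f ∘ Sum.inr)).det := by
  set A' := A.submatrix f e
  set B' := B.submatrix e f
  have hA'B' : A' * B' = 1 := by rw [submatrix_mul_equiv, hAB, submatrix_one_equiv]
  have key : A' * fromBlocks 1 B'.toBlocks₁₂ 0 B'.toBlocks₂₂ =
      fromBlocks A'.toBlocks₁₁ 0 A'.toBlocks₂₁ 1 := by
    -- the `inr` columns of both sides are those of `A' * B' = 1`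
    refine Matrix.ext fun x y => ?_
    rcases y with j | j
    · rcases x with i | i <;>
        simp [mul_apply, Fintype.sum_sum_type, toBlocks₁₁, toBlocks₂₁, one_apply]
    · have := congrFun (congrFun hA'B' x) (Sum.inr j)
      rw [mul_apply, Fintype.sum_sum_type] at this
      rcases x with i | i <;>
        simpa [mul_apply, Fintype.sum_sum_type, toBlocks₁₂, toBlocks₂₂, one_apply] using this
  have hA' : A'.det = Perm.sign (e.trans f.symm) * A.det := by
    rw [show A' = (A.submatrix f f).submatrix id (e.trans f.symm) by ext; simp [A'],
      det_permute', det_submatrix_equiv_self]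
  have := congrArg det key
  rw [det_mul, det_fromBlocks_zero₂₁, det_fromBlocks_zero₁₂, det_one, det_one, one_mul, mul_one,
    hA'] at this
  exact this.symm

end Matrix

theorem Equiv.Perm.sign_trans_finSumFinEquiv_symm {a b : ℕ} (e : Fin a ⊕ Fin b ≃ Fin (a + b))
    (hl : StrictMono (e ∘ Sum.inl)) (hr : StrictMono (e ∘ Sum.inr)) :
    Perm.sign (e.trans finSumFinEquiv.symm) =
      (-1) ^ #{p : Fin a × Fin b | e (Sum.inr p.2) < e (Sum.inl p.1)} := by
  rw [← sign_symm_trans_trans _ finSumFinEquiv, sign_eq_prod_prod_Iio,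
    ← (finSumFinEquiv : Fin a ⊕ Fin b ≃ _).prod_comp]
  simp only [← filter_gt_eq_Iio, prod_filter]
  simp_rw [← (finSumFinEquiv : Fin a ⊕ Fin b ≃ _).prod_comp]
  have hl' : ∀ x y, e (Sum.inl x) < e (Sum.inl y) ↔ x < y := fun x y => hl.lt_iff_lt
  have hr' : ∀ x y, e (Sum.inr x) < e (Sum.inr y) ↔ x < y := fun x y => hr.lt_iff_lt
  have hll : ∀ x y : Fin a, Fin.castAdd b x < Fin.castAdd b y ↔ x < y := fun x y => Iff.rfl
  have hlr : ∀ (i : Fin a) (j : Fin b), Fin.castAdd b i < Fin.natAdd a j := fun i j => by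
    simp [Fin.lt_def]; omega
  have hrl : ∀ (i : Fin a) (j : Fin b), ¬ Fin.natAdd a j < Fin.castAdd b i := fun i j => by
    simp [Fin.lt_def]; omega
  simp +contextual [Fintype.prod_sum_type, hl', hr', hlr, hrl, hll, Fin.natAdd_lt_natAdd_iff]
  rw [← Fintype.prod_prod_type_right
    (f := fun p : Fin a × Fin b => if e (Sum.inl p.1) < e (Sum.inr p.2) then 1 else -1),
    prod_ite, prod_const_one, one_mul, prod_const]
  congr 2
  refine filter_congr fun p _ => ?_
  rw [not_lt, le_iff_lt_or_eq]
  simp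

lemma hh_of_neg {k : ℤ} (hk : k < 0) : hh k = 0 := if_pos hk

lemma ee_of_neg {k : ℤ} (hk : k < 0) : ee k = 0 := if_pos hk

lemma ee_natCast (m : ℕ) : ee m = (of fun a b : Fin m => hh (1 - a + b)).det := by
  simp [ee, schurN]

/-- The matrix is that of `ee (m + 1)` with row `0` and column `j` removed. -/
lemma det_of_hh_sub_add_ite {m j : ℕ} (hj : j ≤ m) :
    (of fun a b : Fin m => hh ((b : ℤ) - a + if j ≤ (b : ℕ) then 1 else 0)).det =
      ee (m - j : ℕ) := by
  obtain ⟨l, rfl⟩ := Nat.exists_eq_add_of_le hj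
  rw [← det_reindex_self finSumFinEquiv.symm]
  set A := reindex finSumFinEquiv.symm finSumFinEquiv.symm
    (of fun a b : Fin (j + l) => hh ((b : ℤ) - a + if j ≤ (b : ℕ) then 1 else 0))
  have h₁₁ : A.toBlocks₁₁ = toeplitz hh j := by
    refine Matrix.ext fun a b => ?_
    simp [A, toBlocks₁₁, toeplitz, Nat.not_le.mpr b.2]
  have h₂₁ : A.toBlocks₂₁ = 0 := by
    refine Matrix.ext fun a b => ?_
    simp [A, toBlocks₂₁, Nat.not_le.mpr b.2]
    exact hh_of_neg (by omega)
  have h₂₂ : A.toBlocks₂₂ = of fun a b : Fin l => hh (1 - a + b) := by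
    refine Matrix.ext fun a b => ?_
    simp [A, toBlocks₂₂]
    congr 1
    ring
  rw [← fromBlocks_toBlocks A, h₂₁, det_fromBlocks_zero₂₁, h₁₁, h₂₂,
    det_toeplitz_eq_one (fun _ => hh_of_neg) rfl, one_mul, ee_natCast, Nat.add_sub_cancel_left]

lemma ee_succ (m : ℕ) :
    ee (m + 1 : ℕ) = ∑ j : Fin (m + 1), (-1) ^ (j : ℕ) * hh (j + 1 : ℕ) * ee (m - j : ℕ) := by
  rw [ee_natCast, det_succ_row_zero]
  refine sum_congr rfl fun j _ => ?_
  rw [← det_of_hh_sub_add_ite (Nat.lt_succ_iff.mp j.2)]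
  congr 3
  · simp [add_comm]
  · refine Matrix.ext fun a b => ?_
    simp only [submatrix_apply, of_apply]
    rcases lt_or_ge (b : ℕ) j with h | h
    · rw [Fin.succAbove_of_castSucc_lt _ _ (by simpa [Fin.lt_def] using h)]
      simp only [Fin.val_succ, Fin.val_castSucc, if_neg (Nat.not_le.mpr h)]
      congr 1
      push_cast
      ring
    · rw [Fin.succAbove_of_le_castSucc _ _ (by simpa [Fin.le_def] using h)]
      simp only [Fin.val_succ, if_pos h]
      congr 1
      push_cast
      ring

lemma sum_neg_one_pow_mul_hh_mul_ee (m : ℕ) :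
    ∑ t ∈ range (m + 1), (-1) ^ t * hh t * ee (m - t : ℕ) = if m = 0 then 1 else 0 := by
  cases m with
  | zero => simp [hh, ee, schurN]
  | succ m =>
    rw [sum_range_succ', if_neg m.succ_ne_zero, Nat.sub_zero, ee_succ,
      Fin.sum_univ_eq_sum_range (fun j => (-1) ^ j * hh (j + 1 : ℕ) * ee (m - j : ℕ)),
      pow_zero, show hh (0 : ℕ) = 1 from rfl, one_mul, one_mul, ← sum_add_distrib]
    refine sum_eq_zero fun t _ => ?_
    rw [Nat.add_sub_add_right]
    ring

lemma toeplitz_negOnePow_hh_mul_toeplitz_ee (N : ℕ) :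
    toeplitz (fun k => (k.negOnePow : MvPolynomial ℕ ℤ) * hh k) N * toeplitz ee N = 1 :=
  toeplitz_mul_toeplitz_eq_one (fun _ hk => by rw [hh_of_neg hk, mul_zero])
    (fun _ => ee_of_neg) (fun m => by
      simpa only [Int.cast_negOnePow_natCast, mul_assoc]
        using sum_neg_one_pow_mul_hh_mul_ee m) N

lemma conjPart_eq_card (n : ℕ) (lam : ℕ → ℕ) (p : ℕ) :
    conjPart n lam p = #{t ∈ range n | p ≤ lam (t + 1)} := rfl

lemma conjPart_le (n : ℕ) (lam : ℕ → ℕ) (p : ℕ) : conjPart n lam p ≤ n :=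
  (card_filter_le _ _).trans_eq (card_range n)

lemma conjPart_antitone (n : ℕ) (lam : ℕ → ℕ) : Antitone (conjPart n lam) := fun _ _ hpq => by
  simp only [conjPart_eq_card]
  exact card_le_card (monotone_filter_right _ fun _ _ h => hpq.trans h)

lemma lt_conjPart_iff {n : ℕ} {lam : ℕ → ℕ} (hlam : AntitoneOn lam (Set.Icc 1 n)) {r : ℕ}
    (hr : r < n) (p : ℕ) : r < conjPart n lam p ↔ p ≤ lam (r + 1) := by
  rw [conjPart_eq_card]
  constructor
  · intro h
    by_contra hp
    have hsub : {t ∈ range n | p ≤ lam (t + 1)} ⊆ range r := fun t ht => by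
      rw [mem_filter, mem_range] at ht
      by_contra htr
      rw [mem_range, not_lt] at htr
      exact hp (ht.2.trans (hlam ⟨by omega, by omega⟩ ⟨by omega, by omega⟩ (by omega)))
    exact absurd ((card_le_card hsub).trans_eq (card_range r)) (by omega)
  · intro h
    have hsub : range (r + 1) ⊆ {t ∈ range n | p ≤ lam (t + 1)} := fun t ht => by
      rw [mem_range] at ht
      exact mem_filter.2 ⟨mem_range.2 (by omega),
        h.trans (hlam ⟨by omega, by omega⟩ ⟨by omega, by omega⟩ (by omega))⟩
    exact (card_range _).symm.trans_le (card_le_card hsub)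

section BetaNumbers

variable {n M : ℕ} {lam : ℕ → ℕ}

lemma add_sub_conjPart_lt_iff (hlam : AntitoneOn lam (Set.Icc 1 n)) {j : ℕ} (hj : j < n)
    (i : ℕ) :
    n + i - conjPart n lam (i + 1) < j + lam (n - j) ↔ i < lam (n - j) := by
  have hook := lt_conjPart_iff hlam (r := n - 1 - j) (by omega) (i + 1)
  rw [show n - 1 - j + 1 = n - j by omega] at hook
  have := conjPart_le n lam (i + 1)
  omega

lemma lt_add_sub_conjPart_iff (hlam : AntitoneOn lam (Set.Icc 1 n)) {j : ℕ} (hj : j < n)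
    (i : ℕ) :
    j + lam (n - j) < n + i - conjPart n lam (i + 1) ↔ lam (n - j) ≤ i := by
  have hook := lt_conjPart_iff hlam (r := n - 1 - j) (by omega) (i + 1)
  rw [show n - 1 - j + 1 = n - j by omega] at hook
  have := conjPart_le n lam (i + 1)
  omega

lemma AntitoneOn.apply_le_of_apply_one_le (hlam : AntitoneOn lam (Set.Icc 1 n))
    (hM : lam 1 ≤ M) {k : ℕ} (hk : k ∈ Set.Icc 1 n) : lam k ≤ M :=
  (hlam ⟨le_rfl, hk.1.trans hk.2⟩ hk hk.1).trans hM

def betaFun (hlam : AntitoneOn lam (Set.Icc 1 n)) (hM : lam 1 ≤ M) :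
    Fin n ⊕ Fin M → Fin (n + M) :=
  Sum.elim
    (fun j => ⟨j + lam (n - j), by
      have := hlam.apply_le_of_apply_one_le hM (k := n - j) ⟨by omega, by omega⟩
      omega⟩)
    (fun i => ⟨n + i - conjPart n lam (i + 1), by have := i.2; omega⟩)

lemma strictMono_betaFun_inl (hlam : AntitoneOn lam (Set.Icc 1 n)) (hM : lam 1 ≤ M) :
    StrictMono (betaFun hlam hM ∘ Sum.inl) := fun j j' hjj' => by
  have := hlam ⟨by omega, by omega⟩ ⟨by omega, by omega⟩ (by omega : n - j' ≤ n - j)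
  simp only [Function.comp_apply, betaFun, Sum.elim_inl, Fin.mk_lt_mk]
  omega

lemma strictMono_betaFun_inr (hlam : AntitoneOn lam (Set.Icc 1 n)) (hM : lam 1 ≤ M) :
    StrictMono (betaFun hlam hM ∘ Sum.inr) := fun i i' hii' => by
  have := conjPart_antitone n lam (by omega : (i : ℕ) + 1 ≤ i' + 1)
  have := conjPart_le n lam (i + 1)
  simp only [Function.comp_apply, betaFun, Sum.elim_inr, Fin.mk_lt_mk]
  omega

lemma betaFun_bijective (hlam : AntitoneOn lam (Set.Icc 1 n)) (hM : lam 1 ≤ M) :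
    Function.Bijective (betaFun hlam hM) := by
  refine (Fintype.bijective_iff_injective_and_card _).2 ⟨?_, by simp⟩
  refine (strictMono_betaFun_inl hlam hM).injective.sumElim
    (strictMono_betaFun_inr hlam hM).injective fun j i h => ?_
  simp only [Function.comp_apply, betaFun, Sum.elim_inl, Fin.mk.injEq] at h
  have := add_sub_conjPart_lt_iff hlam j.2 i
  have := lt_add_sub_conjPart_iff hlam j.2 i
  omega

/-- Macdonald, *Symmetric functions*, I.(1.7). -/
noncomputable def betaEquiv (hlam : AntitoneOn lam (Set.Icc 1 n)) (hM : lam 1 ≤ M) :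
    Fin n ⊕ Fin M ≃ Fin (n + M) :=
  Equiv.ofBijective _ (betaFun_bijective hlam hM)

lemma card_betaEquiv_inversions (hlam : AntitoneOn lam (Set.Icc 1 n)) (hM : lam 1 ≤ M) :
    #{p : Fin n × Fin M | betaEquiv hlam hM (Sum.inr p.2) < betaEquiv hlam hM (Sum.inl p.1)} =
      ∑ j : Fin n, lam (n - j) := by
  rw [card_filter, Fintype.sum_prod_type]
  refine sum_congr rfl fun j _ => ?_
  rw [← card_filter]
  simp only [betaEquiv, Equiv.ofBijective_apply, betaFun, Sum.elim_inl, Sum.elim_inr,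
    Fin.mk_lt_mk]
  rw [filter_congr fun (i : Fin M) _ => add_sub_conjPart_lt_iff hlam j.2 i,
    Fin.card_filter_val_lt, min_eq_right (hlam.apply_le_of_apply_one_le hM ⟨by omega, by omega⟩)]

lemma det_submatrix_toeplitz_negOnePow_hh (hlam : AntitoneOn lam (Set.Icc 1 n))
    (hM : lam 1 ≤ M) :
    ((toeplitz (fun k => (k.negOnePow : MvPolynomial ℕ ℤ) * hh k) (n + M)).submatrix
      (finSumFinEquiv ∘ Sum.inl) (betaEquiv hlam hM ∘ Sum.inl)).det =
      (-1) ^ (∑ j : Fin n, lam (n - j)) * schurN n (fun i => lam (i + 1)) := by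
  set T := (of fun i j : Fin n => hh ((lam (i + 1) : ℤ) - i + j)).submatrix Fin.rev Fin.rev
  set X := of fun j j' : Fin n => (-1) ^ lam (n - j') * Tᵀ j j'
  have h : (toeplitz (fun k => (k.negOnePow : MvPolynomial ℕ ℤ) * hh k) (n + M)).submatrix
      (finSumFinEquiv ∘ Sum.inl) (betaEquiv hlam hM ∘ Sum.inl) =
      of fun j j' : Fin n => (-1) ^ ((j : ℕ) + (j' : ℕ)) * X j j' := by
    refine Matrix.ext fun j j' => ?_
    simp only [toeplitz, submatrix_apply, of_apply, transpose_apply, Function.comp_apply, T,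
      betaEquiv, Equiv.ofBijective_apply, betaFun, Sum.elim_inl, finSumFinEquiv_apply_left,
      Fin.val_castAdd, Fin.val_rev, X]
    have := j.2
    have := j'.2
    rw [show n - (j' + 1) + 1 = n - j' by omega, Int.negOnePow_sub, Units.val_mul, Int.cast_mul,
      Int.cast_negOnePow_natCast, Int.cast_negOnePow_natCast,
      show ((lam (n - j') : ℕ) : ℤ) - ((n - (j' + 1) : ℕ) : ℤ) + ((n - (j + 1) : ℕ) : ℤ) =
        ((j' + lam (n - j') : ℕ) : ℤ) - (j : ℕ) by push_cast; omega]
    ring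
  rw [h, det_of_neg_one_pow_add_mul, det_mul_row, prod_pow_eq_pow_sum, det_transpose]
  exact congrArg _ (det_submatrix_equiv_self Fin.revPerm _)

lemma submatrix_toeplitz_ee (hlam : AntitoneOn lam (Set.Icc 1 n)) (hM : lam 1 ≤ M) :
    (toeplitz ee (n + M)).submatrix (betaEquiv hlam hM ∘ Sum.inr) (finSumFinEquiv ∘ Sum.inr) =
      of fun i j : Fin M => ee ((conjPart n lam ((i : ℕ) + 1) : ℤ) - (i : ℕ) + (j : ℕ)) := by
  refine Matrix.ext fun i j => ?_
  simp only [toeplitz, submatrix_apply, of_apply, Function.comp_apply, betaEquiv,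
    Equiv.ofBijective_apply, betaFun, Sum.elim_inr, finSumFinEquiv_apply_right, Fin.val_natAdd]
  have := conjPart_le n lam (i + 1)
  congr 1
  push_cast
  omega

end BetaNumbers

theorem dual_jacobi_trudi_general (n M : ℕ) (lam : ℕ → ℕ)
    (hanti : ∀ i j, 1 ≤ i → i ≤ j → j ≤ n → lam j ≤ lam i)
    (hM : lam 1 ≤ M) :
    schurN n (fun i => lam (i + 1)) =
      Matrix.det (Matrix.of fun i j : Fin M =>
        ee ((conjPart n lam ((i : ℕ) + 1) : ℤ) - (i : ℕ) + (j : ℕ))) := by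
  have hlam : AntitoneOn lam (Set.Icc 1 n) := fun i hi j hj hij => hanti i j hi.1 hij hj.2
  have jacobi := det_submatrix_inl_of_mul_eq_one
    (toeplitz_negOnePow_hh_mul_toeplitz_ee (n + M)) (betaEquiv hlam hM) finSumFinEquiv
  rw [det_submatrix_toeplitz_negOnePow_hh, submatrix_toeplitz_ee,
    det_toeplitz_eq_one (fun _ hk => by rw [hh_of_neg hk, mul_zero]) (by simp [hh]),
    Perm.sign_trans_finSumFinEquiv_symm _ (strictMono_betaFun_inl hlam hM)
      (strictMono_betaFun_inr hlam hM), card_betaEquiv_inversions, mul_one] at jacobi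
  push_cast at jacobi
  exact mul_left_cancel₀ (pow_ne_zero _ (neg_ne_zero.2 one_ne_zero)) jacobi

/-- Dual Jacobi–Trudi identity: for a partition `λ` with `λ₁ = m` and any `M ≥ m`,
`s_λ = det (e_{λ'_i - i + j})_{1 ≤ i,j ≤ M}`. -/
theorem dual_jacobi_trudi (n M : ℕ) (lam : ℕ → ℕ)
    (hanti : ∀ i j, 1 ≤ i → i ≤ j → j ≤ n → lam j ≤ lam i)
    (hpos : ∀ i, 1 ≤ i → i ≤ n → 0 < lam i)
    (hM : lam 1 ≤ M) :
    schurN n (fun i => lam (i + 1)) =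
      Matrix.det (Matrix.of fun i j : Fin M =>
        ee ((conjPart n lam ((i : ℕ) + 1) : ℤ) - (i : ℕ) + (j : ℕ))) :=
  dual_jacobi_trudi_general n M lam hanti hM
end

section
/- Plücker relation for determinants: let A and B be p×p matrices over a commutative ring, and fix indices 1 ≤ r₁ < r₂ < ... < r_k ≤ p. Then det(A)·det(B) equals the sum over all 1 ≤ s₁ < ... < s_k ≤ p of det(A')·det(B'), where A' is obtained from A by replacing its rows r₁,...,r_k with rows s₁,...,s_k of B (in this order), and B' is obtained from B by replacing its rows s₁,...,s_k with rows r₁,...,r_k of A (in this order). -/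
/-!
For fixed `A` and `r`, the right-hand side is multilinear in the rows of `B`. It is also
alternating: if rows `i ≠ j` of `B` agree, exchanging `i` and `j` in the index set
`{s₁, …, s_k}` is an involution on the summands that reverses their sign, and the summands it
fixes vanish because one of their two determinants has two equal rows. Hence the right-hand side
is its value at `B = 1` times `det B`, and at `B = 1` it is the Laplace expansion of `det A` along
the rows `r₁, …, r_k`.
-/

open scoped Classical

open Function Equiv

namespace Function

variable {α β γ : Type*}

theorem extend_update_of_injective [DecidableEq α] [DecidableEq β] {f : α → β} (hf : Injective f)
    (g : α → γ) (e : β → γ) (a : α) (x : γ) :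
    extend f (update g a x) e = update (extend f g e) (f a) x := by
  funext b
  by_cases hb : ∃ a', f a' = b
  · obtain ⟨a', rfl⟩ := hb
    rw [hf.extend_apply, update_apply_of_injective _ hf]
    simp only [hf.extend_apply]
  · have hne : b ≠ f a := fun h => hb ⟨a, h.symm⟩
    rw [extend_apply' _ _ _ hb, update_of_ne hne, extend_apply' _ _ _ hb]

theorem extend_update_of_mem_range [DecidableEq β] {f : α → β} (g : α → γ) (e : β → γ) {b : β}
    (hb : b ∈ Set.range f) (x : γ) : extend f g (update e b x) = extend f g e := by
  funext c
  by_cases hc : ∃ a, f a = c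
  · simp only [extend_def, dif_pos hc]
  · have hne : c ≠ b := by rintro rfl; exact hc hb
    rw [extend_apply' _ _ _ hc, extend_apply' _ _ _ hc, update_of_ne hne]

theorem extend_update_of_notMem_range [DecidableEq β] {f : α → β} (g : α → γ) (e : β → γ) {b : β}
    (hb : b ∉ Set.range f) (x : γ) : extend f g (update e b x) = update (extend f g e) b x := by
  funext c
  by_cases hcb : c = b
  · subst hcb
    rw [extend_apply' _ _ _ hb, update_self, update_self]
  · rw [update_of_ne hcb]
    by_cases hc : ∃ a, f a = c
    · simp only [extend_def, dif_pos hc]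
    · rw [extend_apply' _ _ _ hc, extend_apply' _ _ _ hc, update_of_ne hcb]

theorem Injective.extend_comp_equiv {f : α → β} (hf : Injective f) (σ : α ≃ α) (g : α → γ)
    (e : β → γ) : extend (f ∘ σ) g e = extend f (g ∘ σ.symm) e := by
  funext b
  by_cases hb : ∃ a, f a = b
  · obtain ⟨a, rfl⟩ := hb
    have : f a = (f ∘ σ) (σ.symm a) := by simp
    rw [hf.extend_apply, this, (hf.comp σ.injective).extend_apply]
    rfl
  · have hb' : ¬∃ a, (f ∘ σ) a = b := fun ⟨a, ha⟩ => hb ⟨σ a, ha⟩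
    rw [extend_apply' _ _ _ hb, extend_apply' _ _ _ hb']

theorem Injective.extend_equiv_comp {f : α → β} (hf : Injective f) (τ : β ≃ β) (g : α → γ)
    (e : β → γ) : extend (τ ∘ f) g e ∘ τ = extend f g (e ∘ τ) := by
  funext b
  by_cases hb : ∃ a, f a = b
  · obtain ⟨a, rfl⟩ := hb
    show extend (τ ∘ f) g e ((τ ∘ f) a) = _
    rw [(τ.injective.comp hf).extend_apply, hf.extend_apply]
  · have hb' : ¬∃ a, (τ ∘ f) a = τ b := fun ⟨a, ha⟩ => hb ⟨a, τ.injective ha⟩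
    rw [comp_apply, extend_apply' _ _ _ hb', extend_apply' _ _ _ hb, comp_apply]

theorem Injective.extend_comp_self {f : α → β} (hf : Injective f) (e : β → γ) :
    extend f (e ∘ f) e = e := by
  funext b
  by_cases hb : ∃ a, f a = b
  · obtain ⟨a, rfl⟩ := hb
    rw [hf.extend_apply, comp_apply]
  · rw [extend_apply' _ _ _ hb]

end Function

theorem Equiv.comp_swap_eq_self {α β : Type*} [DecidableEq α] {y : α → β} {i j : α}
    (hy : y i = y j) : y ∘ swap i j = y := by
  rw [comp_swap_eq_update, hy, update_eq_self, ← hy, update_eq_self]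

theorem StrictMono.exists_apply_notMem_range_of_ne {α : Type*} [LinearOrder α] {k : ℕ}
    {s t : Fin k → α} (hs : StrictMono s) (ht : StrictMono t) (hne : s ≠ t) :
    ∃ b, t b ∉ Set.range s := by
  by_contra! h
  have hsub : Set.range t ⊆ Set.range s := Set.range_subset_iff.2 h
  have hcard : (Set.range s).ncard ≤ (Set.range t).ncard := by
    rw [Set.ncard_range_of_injective hs.injective, Set.ncard_range_of_injective ht.injective]
  exact hne ((ht.range_inj hs).1
    (Set.eq_of_subset_of_ncard_le hsub hcard (Set.finite_range s))).symm

namespace Tuple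

variable {n : Type*} [LinearOrder n] {k : ℕ}

theorem strictMono_comp_sort {v : Fin k → n} (hv : Injective v) : StrictMono (v ∘ sort v) :=
  (monotone_sort v).strictMono_of_injective (hv.comp (sort v).injective)

noncomputable def swapSort (i j : n) (s : {s : Fin k → n // StrictMono s}) :
    {s : Fin k → n // StrictMono s} :=
  ⟨(Equiv.swap i j ∘ s.1) ∘ sort (Equiv.swap i j ∘ s.1),
    strictMono_comp_sort ((Equiv.swap i j).injective.comp s.2.injective)⟩

theorem range_swapSort (i j : n) (s : {s : Fin k → n // StrictMono s}) :
    Set.range (swapSort i j s).1 = Equiv.swap i j '' Set.range s.1 := by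
  rw [swapSort, EquivLike.range_comp, Set.range_comp]

theorem swapSort_involutive (i j : n) : Involutive (swapSort (k := k) i j) := fun s =>
  Subtype.ext <| ((swapSort i j _).2.range_inj s.2).1 <| by
    rw [range_swapSort, range_swapSort, Set.image_image]
    simp only [swap_apply_self, Set.image_id']

theorem mem_range_iff_of_swapSort_eq {i j : n} {s : {s : Fin k → n // StrictMono s}}
    (hfix : swapSort i j s = s) : i ∈ Set.range s.1 ↔ j ∈ Set.range s.1 := by
  have h := congrArg (fun t => Set.range t.1) hfix
  simp only [range_swapSort] at h
  constructor
  · intro hi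
    rw [← h]
    exact ⟨i, hi, swap_apply_left i j⟩
  · intro hj
    rw [← h]
    exact ⟨j, hj, swap_apply_right i j⟩

end Tuple

namespace AlternatingMap

variable {R M N ι : Type*} [Semiring R] [AddCommMonoid M] [Module R M] [AddCommMonoid N]
  [Module R N]

instance : IsZeroApply (M [⋀^ι]→ₗ[R] N) (ι → M) N := ⟨fun _ => rfl⟩

instance : IsAddApply (M [⋀^ι]→ₗ[R] N) (ι → M) N := ⟨fun _ _ _ => rfl⟩

end AlternatingMap

theorem Pi.basisFun_eq_one {R n : Type*} [Semiring R] [Finite n] [DecidableEq n] :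
    ⇑(Pi.basisFun R n) = (1 : Matrix n n R) := by
  ext i j
  rw [Pi.basisFun_apply, Matrix.one_eq_pi_single]

namespace Matrix

-- `extend r u M` is `M` with its row `r a` replaced by `u a`, for each `a`.
theorem of_dite_exists_eq_extend {l m n ι α : Type*} (M : Matrix m n α) (N : Matrix l n α)
    (r : ι → m) (s : ι → l) [∀ i, Decidable (∃ a, r a = i)] :
    (of fun i j => if h : ∃ a, r a = i then N (s h.choose) j else M i j) =
      extend r (N ∘ s) M := by
  ext i j
  rw [of_apply, extend_def r (N ∘ s) M i]
  split_ifs <;> rfl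

section ReplaceRows

variable {R : Type*} [CommRing R] {n ι : Type*} [Fintype n] [DecidableEq n]

noncomputable def detExtendRows [DecidableEq ι] (M : Matrix n n R) {r : ι → n}
    (hr : Injective r) : (n → R) [⋀^ι]→ₗ[R] R where
  toMultilinearMap := MultilinearMap.mk' (fun u => det (extend r u M : Matrix n n R))
    (fun u a x y => by
      simp only [extend_update_of_injective hr u M]
      exact det_updateRow_add _ _ _ _)
    (fun u a c x => by
      simp only [extend_update_of_injective hr u M]
      exact det_updateRow_smul _ _ _ _)
  map_eq_zero_of_eq' u a b hab hne :=
    det_zero_of_row_eq (hr.ne hne) (by rw [hr.extend_apply u M, hr.extend_apply u M, hab])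

@[simp]
theorem detExtendRows_apply [DecidableEq ι] (M : Matrix n n R) {r : ι → n} (hr : Injective r)
    (u : ι → n → R) : detExtendRows M hr u = det (extend r u M : Matrix n n R) :=
  rfl

noncomputable def plueckerTerm (A y : Matrix n n R) (r s : ι → n) : R :=
  det (extend r (y ∘ s) A : Matrix n n R) * det (extend s (A ∘ r) y : Matrix n n R)

theorem plueckerTerm_comp_perm [Fintype ι] [DecidableEq ι] (A y : Matrix n n R) {r s : ι → n}
    (hr : Injective r) (hs : Injective s) (σ : Perm ι) :
    plueckerTerm A y r (s ∘ σ) = plueckerTerm A y r s := by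
  have h₁ : det (extend r (y ∘ (s ∘ σ)) A : Matrix n n R) =
      Perm.sign σ • det (extend r (y ∘ s) A : Matrix n n R) :=
    (detExtendRows A hr).map_perm (y ∘ s) σ
  have h₂ : det (extend (s ∘ σ) (A ∘ r) y : Matrix n n R) =
      Perm.sign σ • det (extend s (A ∘ r) y : Matrix n n R) := by
    rw [hs.extend_comp_equiv σ (A ∘ r) y, ← Perm.sign_symm σ]
    exact (detExtendRows y hs).map_perm (A ∘ r) σ.symm
  rw [plueckerTerm, plueckerTerm, h₁, h₂, smul_mul_smul_comm, Int.units_mul_self, one_smul]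

theorem plueckerTerm_swap_comp (A y : Matrix n n R) (r : ι → n) {s : ι → n} (hs : Injective s)
    {i j : n} (hij : i ≠ j) (hy : y i = y j) :
    plueckerTerm A y r (Equiv.swap i j ∘ s) = -plueckerTerm A y r s := by
  have hyτ := Equiv.comp_swap_eq_self hy
  have h₁ : y ∘ (Equiv.swap i j ∘ s) = y ∘ s := funext fun a => congrFun hyτ (s a)
  have h₂ : submatrix (extend (Equiv.swap i j ∘ s) (A ∘ r) y : Matrix n n R) (Equiv.swap i j) id =
      extend s (A ∘ r) y := by
    have := hs.extend_equiv_comp (Equiv.swap i j) (A ∘ r) y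
    rw [hyτ] at this
    ext a b
    exact congrFun (congrFun this a) b
  have h₃ := det_permute (Equiv.swap i j) (extend (Equiv.swap i j ∘ s) (A ∘ r) y : Matrix n n R)
  rw [h₂, Perm.sign_swap hij, Units.val_neg, Units.val_one, Int.cast_neg, Int.cast_one,
    neg_one_mul] at h₃
  rw [plueckerTerm, plueckerTerm, h₁, h₃]
  ring

theorem plueckerTerm_eq_zero_of_mem_range_iff (A y : Matrix n n R) {r s : ι → n}
    (hr : Injective r) {i j : n} (hij : i ≠ j) (hy : y i = y j)
    (hrange : i ∈ Set.range s ↔ j ∈ Set.range s) : plueckerTerm A y r s = 0 := by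
  by_cases hi : i ∈ Set.range s
  · obtain ⟨a, rfl⟩ := hi
    obtain ⟨b, rfl⟩ := hrange.1 ⟨a, rfl⟩
    have hrow : (extend r (y ∘ s) A : Matrix n n R) (r a) = extend r (y ∘ s) A (r b) := by
      rw [hr.extend_apply (y ∘ s) A, hr.extend_apply (y ∘ s) A]
      exact hy
    rw [plueckerTerm, det_zero_of_row_eq (hr.ne (ne_of_apply_ne s hij)) hrow, zero_mul]
  · have hj : j ∉ Set.range s := fun hj => hi (hrange.2 hj)
    have hrow : (extend s (A ∘ r) y : Matrix n n R) i = extend s (A ∘ r) y j := by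
      rw [extend_apply' (A ∘ r) y i hi, extend_apply' (A ∘ r) y j hj, hy]
    rw [plueckerTerm, det_zero_of_row_eq hij hrow, mul_zero]

theorem exists_linearMap_plueckerTerm_update [DecidableEq ι] (A y : Matrix n n R) {r s : ι → n}
    (hr : Injective r) (hs : Injective s) (i : n) :
    ∃ L : (n → R) →ₗ[R] R, ∀ x, plueckerTerm A (update y i x) r s = L x := by
  by_cases hi : i ∈ Set.range s
  · obtain ⟨b, rfl⟩ := hi
    refine ⟨det (extend s (A ∘ r) y : Matrix n n R) •
      (detExtendRows A hr).toMultilinearMap.toLinearMap (y ∘ s) b, fun x => ?_⟩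
    unfold plueckerTerm
    rw [update_comp_eq_of_injective y hs b x,
      extend_update_of_mem_range (A ∘ r) y ⟨b, rfl⟩ x, mul_comm]
    rfl
  · refine ⟨det (extend r (y ∘ s) A : Matrix n n R) •
      detRowAlternating.toMultilinearMap.toLinearMap (extend s (A ∘ r) y) i, fun x => ?_⟩
    unfold plueckerTerm
    rw [update_comp_eq_of_forall_ne y x fun a h => hi ⟨a, h⟩,
      extend_update_of_notMem_range (A ∘ r) y hi x]
    rfl

end ReplaceRows

section PlueckerSum

variable {R : Type*} [CommRing R] {n : Type*} [Fintype n] [LinearOrder n] {k : ℕ}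

noncomputable def plueckerSum (A y : Matrix n n R) (r : Fin k → n) : R :=
  ∑ s : {s : Fin k → n // StrictMono s}, plueckerTerm A y r s

theorem plueckerSum_eq_zero_of_row_eq (A y : Matrix n n R) {r : Fin k → n} (hr : Injective r)
    {i j : n} (hij : i ≠ j) (hy : y i = y j) : plueckerSum A y r = 0 := by
  refine Finset.sum_ninvolution (Tuple.swapSort i j) (fun s => ?_) (fun s hs hfix => ?_)
    (fun _ => Finset.mem_univ _) (Tuple.swapSort_involutive i j)
  · have hτs : Injective (Equiv.swap i j ∘ s.1) := (Equiv.swap i j).injective.comp s.2.injective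
    rw [Tuple.swapSort, plueckerTerm_comp_perm A y hr hτs,
      plueckerTerm_swap_comp A y r s.2.injective hij hy, add_neg_cancel]
  · exact hs (plueckerTerm_eq_zero_of_mem_range_iff A y hr hij hy
      (Tuple.mem_range_iff_of_swapSort_eq hfix))

noncomputable def plueckerSumAlternating (A : Matrix n n R) {r : Fin k → n} (hr : Injective r) :
    (n → R) [⋀^n]→ₗ[R] R where
  toMultilinearMap := MultilinearMap.mk' (fun y => plueckerSum A y r)
    (fun y i x x' => by
      simp only [plueckerSum, ← Finset.sum_add_distrib]
      refine Finset.sum_congr rfl fun s _ => ?_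
      obtain ⟨L, hL⟩ := exists_linearMap_plueckerTerm_update A y hr s.2.injective i
      rw [hL, hL, hL, map_add])
    (fun y i c x => by
      simp only [plueckerSum, Finset.smul_sum]
      refine Finset.sum_congr rfl fun s _ => ?_
      obtain ⟨L, hL⟩ := exists_linearMap_plueckerTerm_update A y hr s.2.injective i
      rw [hL, hL, map_smul])
  map_eq_zero_of_eq' y _ _ hy hij := plueckerSum_eq_zero_of_row_eq A y hr hij hy

theorem plueckerSum_eq_mul_det (A B : Matrix n n R) {r : Fin k → n} (hr : Injective r) :
    plueckerSum A B r = plueckerSum A 1 r * det B := by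
  have h := congrArg (· B) ((plueckerSumAlternating A hr).eq_smul_basis_det (Pi.basisFun R n))
  rw [Pi.basisFun_det, Pi.basisFun_eq_one] at h
  exact h

theorem det_extend_one_comp {s t : Fin k → n} (hs : StrictMono s) (ht : StrictMono t) :
    det (extend s ((1 : Matrix n n R) ∘ t) (1 : Matrix n n R) : Matrix n n R) =
      if s = t then 1 else 0 := by
  split_ifs with hst
  · subst hst
    rw [hs.injective.extend_comp_self (1 : Matrix n n R), det_one]
  · obtain ⟨b, hb⟩ := hs.exists_apply_notMem_range_of_ne ht hst
    refine det_zero_of_row_eq (fun h => hb ⟨b, h⟩) ?_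
    rw [hs.injective.extend_apply ((1 : Matrix n n R) ∘ t) (1 : Matrix n n R),
      extend_apply' ((1 : Matrix n n R) ∘ t) (1 : Matrix n n R) _ hb]
    rfl

theorem det_extend_eq_sum (A : Matrix n n R) {r : Fin k → n} (hr : Injective r)
    (u : Fin k → n → R) :
    det (extend r u A : Matrix n n R) = ∑ s : {s : Fin k → n // StrictMono s},
      det (extend r ((1 : Matrix n n R) ∘ s) A : Matrix n n R) *
        det (extend s u (1 : Matrix n n R) : Matrix n n R) := by
  suffices h : detExtendRows A hr = ∑ s : {s : Fin k → n // StrictMono s},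
      det (extend r ((1 : Matrix n n R) ∘ s) A : Matrix n n R) • detExtendRows 1 s.2.injective by
    simpa [_root_.sum_apply] using congrArg (· u) h
  refine (Pi.basisFun R n).ext_alternating fun v hv => ?_
  have ht := Tuple.strictMono_comp_sort hv
  have hv' : (fun a => Pi.basisFun R n (v a)) =
      ((1 : Matrix n n R) ∘ (v ∘ Tuple.sort v)) ∘ (Tuple.sort v).symm := by
    rw [Pi.basisFun_eq_one]
    funext a
    show (1 : Matrix n n R) (v a) = (1 : Matrix n n R) (v (Tuple.sort v ((Tuple.sort v).symm a)))
    rw [apply_symm_apply]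
  rw [hv', AlternatingMap.map_perm, AlternatingMap.map_perm, _root_.sum_apply,
    Finset.sum_eq_single ⟨_, ht⟩]
  · congr 1
    simp only [AlternatingMap.smul_apply, detExtendRows_apply, smul_eq_mul]
    rw [det_extend_one_comp ht ht, if_pos rfl, mul_one]
  · intro s _ hs
    simp only [AlternatingMap.smul_apply, detExtendRows_apply, smul_eq_mul]
    rw [det_extend_one_comp s.2 ht, if_neg (Subtype.ext_iff.not.1 hs), mul_zero]
  · simp

theorem plueckerSum_one (A : Matrix n n R) {r : Fin k → n} (hr : Injective r) :
    plueckerSum A 1 r = det A := by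
  rw [← hr.extend_comp_self A, det_extend_eq_sum A hr, hr.extend_comp_self A]
  rfl

theorem plueckerSum_eq_det_mul_det (A B : Matrix n n R) {r : Fin k → n} (hr : Injective r) :
    plueckerSum A B r = det A * det B := by
  rw [plueckerSum_eq_mul_det A B hr, plueckerSum_one A hr]

end PlueckerSum

end Matrix

theorem pluecker_relation_general {R : Type*} [CommRing R] (p k : ℕ)
    (A B : Matrix (Fin p) (Fin p) R) (r : Fin k → Fin p) (hr : StrictMono r) :
    A.det * B.det =
      ∑ s : {s : Fin k → Fin p // StrictMono s},
        (Matrix.det (Matrix.of fun i j =>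
            if h : ∃ a, r a = i then B (s.1 h.choose) j else A i j)) *
        (Matrix.det (Matrix.of fun i j =>
            if h : ∃ a, s.1 a = i then A (r h.choose) j else B i j)) := by
  rw [← Matrix.plueckerSum_eq_det_mul_det A B hr.injective]
  refine Finset.sum_congr rfl fun s _ => ?_
  rw [Matrix.of_dite_exists_eq_extend, Matrix.of_dite_exists_eq_extend]
  rfl

/-- Plücker relation for determinants: for `p×p` matrices `A`, `B` over a commutative ring
and a strictly increasing sequence of row indices `r : Fin k → Fin p` (with `1 ≤ k ≤ p`),
`det A · det B` equals the sum over all strictly increasing `s : Fin k → Fin p` of the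
product of determinants obtained by exchanging the rows `r₁,…,r_k` of `A` with the rows
`s₁,…,s_k` of `B` (in order). -/
theorem pluecker_relation {R : Type*} [CommRing R] (p k : ℕ) (hk : 1 ≤ k) (hkp : k ≤ p)
    (A B : Matrix (Fin p) (Fin p) R) (r : Fin k → Fin p) (hr : StrictMono r) :
    A.det * B.det =
      ∑ s : {s : Fin k → Fin p // StrictMono s},
        (Matrix.det (Matrix.of fun i j =>
            if h : ∃ a, r a = i then B (s.1 h.choose) j else A i j)) *
        (Matrix.det (Matrix.of fun i j =>
            if h : ∃ a, s.1 a = i then A (r h.choose) j else B i j)) :=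
  pluecker_relation_general p k A B r hr
end

section
/- Let λ = (ξ₁^{m₁}, ..., ξ_k^{m_k}) be a partition with distinct parts ξ₁ > ξ₂ > ... > ξ_k > 0 and multiplicities m_i ≥ 1, and let y₀ = 0, y_i = m₁ + ... + m_i, ξ_{k+1} = 0. Let 𝔠_λ = {α_i = (ξ_i, y_{i-1}) : 1 ≤ i ≤ k+1} be the set of inner corners of λ. For each corner α_i, let λ⁺₋(α_i) be the partition obtained from λ by horizontally shifting all inner corners above α_i by +1 and vertically shifting all inner corners below α_i by −1, and let λ⁻₊(α_i) be the partition obtained from λ by horizontally shifting all inner corners above α_i by −1 and vertically shifting all inner corners below α_i by +1. Then s_λ · s_λ = Σ_{α ∈ 𝔠_λ} s_{λ⁺₋(α)} · s_{λ⁻₊(α)}. -/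
open MvPolynomial

/-- The parts of the partition `λ = (ξ₁^{m₁}, …, ξ_k^{m_k})`. -/
def partsOf {k : ℕ} (ξ m : Fin k → ℕ) : List ℕ :=
  (List.ofFn fun j : Fin k => List.replicate (m j) (ξ j)).flatten

/-- `λ⁺₋(α_i)`: shift the inner corners above `α_i` horizontally by `+1` and the
inner corners below `α_i` vertically by `-1`; i.e. the partition
`((ξ₁+1)^{m₁}, …, (ξ_{i-1}+1)^{m_{i-1}}, ξ_i^{m_i-1}, ξ_{i+1}^{m_{i+1}}, …, ξ_k^{m_k})`
(0-based corner index `i : Fin (k+1)`). -/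
def plusMinusParts {k : ℕ} (ξ m : Fin k → ℕ) (i : Fin (k + 1)) : List ℕ :=
  (List.ofFn fun j : Fin k =>
    if (j : ℕ) < (i : ℕ) then List.replicate (m j) (ξ j + 1)
    else if (j : ℕ) = (i : ℕ) then List.replicate (m j - 1) (ξ j)
    else List.replicate (m j) (ξ j)).flatten

/-- `λ⁻₊(α_i)`: shift the inner corners above `α_i` horizontally by `-1` and the
inner corners below `α_i` vertically by `+1`; i.e. the partition
`((ξ₁-1)^{m₁}, …, (ξ_{i-1}-1)^{m_{i-1}}, ξ_i^{m_i+1}, ξ_{i+1}^{m_{i+1}}, …, ξ_k^{m_k})`. -/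
def minusPlusParts {k : ℕ} (ξ m : Fin k → ℕ) (i : Fin (k + 1)) : List ℕ :=
  (List.ofFn fun j : Fin k =>
    if (j : ℕ) < (i : ℕ) then List.replicate (m j) (ξ j - 1)
    else if (j : ℕ) = (i : ℕ) then List.replicate (m j + 1) (ξ j)
    else List.replicate (m j) (ξ j)).flatten

lemma hh_neg {k : ℤ} (h : k < 0) : hh k = 0 := if_pos h
lemma hh_zero : hh 0 = 1 := rfl

noncomputable def Den (M : ℕ) (x : Fin M → ℤ) : MvPolynomial ℕ ℤ :=
  Matrix.det (Matrix.of fun i j : Fin M => hh (x i + (j : ℕ)))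

lemma Den_dup {M : ℕ} (x : Fin M → ℤ) {i j : Fin M} (hij : i ≠ j) (h : x i = x j) :
    Den M x = 0 := by
  apply Matrix.det_zero_of_row_eq hij
  funext s
  simp [Matrix.of_apply, h]

lemma Den_pad {M : ℕ} (x : Fin (M + 1) → ℤ) (hx : x (Fin.last M) = -(M : ℤ)) :
    Den (M + 1) x = Den M (x ∘ Fin.castSucc) := by
  rw [Den, Matrix.det_succ_row _ (Fin.last M)]
  rw [Fintype.sum_eq_single (Fin.last M)]
  · have h1 : (Matrix.of fun i j : Fin (M+1) => hh (x i + (j:ℕ))) (Fin.last M) (Fin.last M) = 1 := by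
      simp only [Matrix.of_apply, hx, Fin.val_last]
      rw [show -(M:ℤ) + (M:ℕ) = 0 by ring, hh_zero]
    rw [h1, mul_one]
    have h2 : ((-1 : MvPolynomial ℕ ℤ)) ^ ((Fin.last M : ℕ) + (Fin.last M : ℕ)) = 1 := by
      rw [Even.neg_one_pow ⟨(Fin.last M : ℕ), rfl⟩]
    rw [h2, one_mul, Den]
    congr 1
    ext i j
    simp [Matrix.submatrix, Fin.succAbove_last, Function.comp]
  · intro j hj
    have hjM : (j : ℕ) < M := by
      rcases Fin.lt_or_eq_of_le (Fin.le_last j) with h | h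
      · simpa [Fin.lt_iff_val_lt_val] using h
      · exact absurd h hj
    have : x (Fin.last M) + (j : ℕ) < 0 := by rw [hx]; omega
    simp [Matrix.of_apply, hh_neg this]

/-- Laplace expansion of `Den` along the first column. -/
lemma Den_expand {M : ℕ} (y : Fin (M + 1) → ℤ) :
    Den (M + 1) y = ∑ i : Fin (M + 1),
      (-1) ^ (i : ℕ) * hh (y i) * Den M (fun s => y (i.succAbove s) + 1) := by
  rw [Den, Matrix.det_succ_column_zero]
  refine Finset.sum_congr rfl fun i _ => ?_
  congr 1
  · congr 1
    simp [Matrix.of_apply]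
  · rw [Den]
    congr 1
    ext r s
    simp only [Matrix.submatrix_apply, Matrix.of_apply]
    congr 1
    push_cast [Fin.val_succ]
    ring
open Matrix in

/-- Generic Grassmann–Plücker relation: for `m+2` vectors `x t` in `R^{m+1}` and
`m` further vectors `e r`, the alternating sum of products of the two determinants
vanishes. -/
lemma gp_relation {R : Type*} [CommRing R] {m : ℕ}
    (x : Fin (m + 2) → Fin (m + 1) → R) (e : Fin m → Fin (m + 1) → R) :
    ∑ t : Fin (m + 2), (-1) ^ (t : ℕ) *
      Matrix.det (Matrix.of fun i j => x (t.succAbove i) j) *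
      Matrix.det (Matrix.of fun i j => (Fin.cons (x t) e : Fin (m+1) → Fin (m+1) → R) i j) = 0 := by
  classical
  set c : Fin (m + 1) → R := fun j =>
    (-1) ^ (j : ℕ) * Matrix.det (Matrix.of fun (r s : Fin m) => e r (j.succAbove s)) with hc
  have hexp : ∀ v : Fin (m + 1) → R,
      Matrix.det (Matrix.of fun i j => (Fin.cons v e : Fin (m+1) → Fin (m+1) → R) i j) = ∑ j, c j * v j := by
    intro v
    rw [Matrix.det_succ_row_zero]
    refine Finset.sum_congr rfl fun j _ => ?_
    have h0 : (Matrix.of fun i j => (Fin.cons v e : Fin (m+1) → Fin (m+1) → R) i j) 0 j = v j := rfl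
    have h1 : ((Matrix.of fun i j => (Fin.cons v e : Fin (m+1) → Fin (m+1) → R) i j).submatrix Fin.succ j.succAbove)
        = Matrix.of fun (r s : Fin m) => e r (j.succAbove s) := by
      ext r s; rfl
    rw [h0, h1, hc]
    ring
  -- the bordered matrix
  set A : Matrix (Fin (m + 2)) (Fin (m + 2)) R :=
    Matrix.of fun t j => (Fin.cons (∑ j', c j' * x t j') (fun j' => x t j') : Fin (m+2) → R) j with hA
  have h1 : A.det = ∑ t : Fin (m + 2), (-1) ^ (t : ℕ) * (∑ j', c j' * x t j') *
      Matrix.det (Matrix.of fun i j => x (t.succAbove i) j) := by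
    rw [Matrix.det_succ_column_zero]
    exact Finset.sum_congr rfl fun t _ => rfl
  have h2 : A.det = 0 := by
    rw [← Matrix.det_transpose]
    have hrow : Aᵀ 0 = ∑ j' : Fin (m + 1), c j' • Aᵀ j'.succ := by
      funext t
      simp only [Matrix.transpose_apply, Finset.sum_apply, Pi.smul_apply, smul_eq_mul]
      rfl
    have hupd : Aᵀ = Aᵀ.updateRow 0 (∑ k : Fin (m + 2), (Fin.cons 0 c : Fin (m+2) → R) k • Aᵀ k) := by
      rw [Fin.sum_univ_succ]
      simp only [Fin.cons_zero, Fin.cons_succ, zero_smul, zero_add]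
      rw [← hrow, Matrix.updateRow_eq_self]
    rw [hupd, Matrix.det_updateRow_sum]
    simp
  rw [h1] at h2
  calc ∑ t : Fin (m + 2), (-1) ^ (t : ℕ) *
      Matrix.det (Matrix.of fun i j => x (t.succAbove i) j) *
      Matrix.det (Matrix.of fun i j => (Fin.cons (x t) e : Fin (m+1) → Fin (m+1) → R) i j)
      = ∑ t : Fin (m + 2), (-1) ^ (t : ℕ) * (∑ j', c j' * x t j') *
        Matrix.det (Matrix.of fun i j => x (t.succAbove i) j) := by
        refine Finset.sum_congr rfl fun t _ => ?_
        rw [hexp (x t)]; ring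
    _ = 0 := h2

/-- The key bilinear determinant identity. -/
lemma key_identity {m : ℕ} (b : Fin (m + 2) → ℤ) (d : Fin (m + 1) → ℤ) :
    ∑ t : Fin (m + 2), (-1) ^ (t : ℕ) *
        Den (m + 1) (fun s => b (t.succAbove s) + 1) *
        Den (m + 2) ((Fin.cons (b t) d : Fin (m+2) → ℤ)) =
      Den (m + 1) (fun s => d s + 1) * Den (m + 2) b := by
  have hsplit : ∀ t : Fin (m + 2),
      Den (m + 2) ((Fin.cons (b t) d : Fin (m+2) → ℤ)) =
        hh (b t) * Den (m + 1) (fun s => d s + 1) +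
        ∑ i : Fin (m + 1), (-1) ^ ((i : ℕ) + 1) * hh (d i) *
          Den (m + 1) ((Fin.cons (b t + 1) (fun s => d (i.succAbove s) + 1) : Fin (m+1) → ℤ)) := by
    intro t
    rw [Den_expand (Fin.cons (b t) d), Fin.sum_univ_succ]
    congr 1
    · simp only [Fin.cons_zero, Fin.val_zero, pow_zero, one_mul]
      have harg0 : (fun s => (Fin.cons (b t) d : Fin (m+2) → ℤ) ((0 : Fin (m+2)).succAbove s) + 1)
          = fun s => d s + 1 := by
        funext s
        have h0 : (0 : Fin (m+2)).succAbove s = s.succ := rfl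
        rw [h0, Fin.cons_succ]
      rw [harg0]
    · refine Finset.sum_congr rfl fun i _ => ?_
      have harg : (fun s => (Fin.cons (b t) d : Fin (m+2) → ℤ) ((i.succ).succAbove s) + 1)
          = Fin.cons (b t + 1) (fun s => d (i.succAbove s) + 1) := by
        funext s
        induction s using Fin.cases with
        | zero => rw [Fin.succ_succAbove_zero, Fin.cons_zero, Fin.cons_zero]
        | succ s' => rw [Fin.succ_succAbove_succ, Fin.cons_succ, Fin.cons_succ]
      rw [Fin.val_succ, Fin.cons_succ, harg]
  have step1 : ∑ t : Fin (m + 2), (-1) ^ (t : ℕ) *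
        Den (m + 1) (fun s => b (t.succAbove s) + 1) *
        Den (m + 2) ((Fin.cons (b t) d : Fin (m+2) → ℤ))
      = (∑ t : Fin (m + 2), (-1) ^ (t : ℕ) * hh (b t) *
          Den (m + 1) (fun s => b (t.succAbove s) + 1)) * Den (m + 1) (fun s => d s + 1)
        + ∑ i : Fin (m + 1), ((-1) ^ ((i : ℕ) + 1) * hh (d i)) *
            ∑ t : Fin (m + 2), (-1) ^ (t : ℕ) *
              Den (m + 1) (fun s => b (t.succAbove s) + 1) *
              Den (m + 1) ((Fin.cons (b t + 1) (fun s => d (i.succAbove s) + 1) : Fin (m+1) → ℤ)) := by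
    have hterm : ∀ t : Fin (m + 2), (-1) ^ (t : ℕ) *
        Den (m + 1) (fun s => b (t.succAbove s) + 1) *
        Den (m + 2) ((Fin.cons (b t) d : Fin (m+2) → ℤ)) = (-1) ^ (t : ℕ) *
        Den (m + 1) (fun s => b (t.succAbove s) + 1) *
        (hh (b t) * Den (m + 1) (fun s => d s + 1) +
        ∑ i : Fin (m + 1), (-1) ^ ((i : ℕ) + 1) * hh (d i) *
          Den (m + 1) ((Fin.cons (b t + 1) (fun s => d (i.succAbove s) + 1) : Fin (m+1) → ℤ))) :=
      fun t => by rw [hsplit t]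
    rw [Finset.sum_congr rfl fun t _ => hterm t]
    simp only [mul_add, Finset.mul_sum, Finset.sum_add_distrib]
    congr 1
    · rw [Finset.sum_mul]
      exact Finset.sum_congr rfl fun t _ => by ring
    · rw [Finset.sum_comm]
      refine Finset.sum_congr rfl fun i _ => ?_
      exact Finset.sum_congr rfl fun t _ => by ring
  rw [step1]
  have hgp : ∀ i : Fin (m + 1),
      ∑ t : Fin (m + 2), (-1) ^ (t : ℕ) *
        Den (m + 1) (fun s => b (t.succAbove s) + 1) *
        Den (m + 1) ((Fin.cons (b t + 1) (fun s => d (i.succAbove s) + 1) : Fin (m+1) → ℤ)) = 0 := by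
    intro i
    have hG := gp_relation (R := MvPolynomial ℕ ℤ)
      (x := fun t j => hh (b t + 1 + (j : ℕ)))
      (e := fun r j => hh (d (i.succAbove r) + 1 + (j : ℕ)))
    rw [← hG]
    refine Finset.sum_congr rfl fun t _ => ?_
    have e2 : Den (m + 1) ((Fin.cons (b t + 1) (fun s => d (i.succAbove s) + 1) : Fin (m+1) → ℤ))
        = Matrix.det (Matrix.of fun r s =>
            (Fin.cons (fun j => hh (b t + 1 + (j : ℕ)))
              (fun r (j : Fin (m+1)) => hh (d (i.succAbove r) + 1 + (j : ℕ))) :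
                Fin (m+1) → Fin (m+1) → MvPolynomial ℕ ℤ) r s) := by
      rw [Den]
      congr 1
      ext r s
      induction r using Fin.cases with
      | zero => rw [Matrix.of_apply, Matrix.of_apply, Fin.cons_zero, Fin.cons_zero]
      | succ r' => rw [Matrix.of_apply, Matrix.of_apply, Fin.cons_succ, Fin.cons_succ]
    rw [e2]
    rfl
  have hterm2 : ∀ i : Fin (m + 1), ((-1) ^ ((i : ℕ) + 1) * hh (d i)) *
            (∑ t : Fin (m + 2), (-1) ^ (t : ℕ) *
              Den (m + 1) (fun s => b (t.succAbove s) + 1) *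
              Den (m + 1) ((Fin.cons (b t + 1) (fun s => d (i.succAbove s) + 1) : Fin (m+1) → ℤ)))
        = ((-1) ^ ((i : ℕ) + 1) * hh (d i)) * 0 :=
    fun i => by rw [hgp i]
  rw [Finset.sum_congr rfl fun i _ => hterm2 i]
  rw [Den_expand b]
  simp only [mul_zero, Finset.sum_const_zero, add_zero]
  ring

lemma insertNth_eq_cons_comp_cycleRange {M : ℕ} (p : Fin (M + 1)) (c : ℤ) (d : Fin M → ℤ) :
    (Fin.insertNth p c d : Fin (M + 1) → ℤ) = (Fin.cons c d : Fin (M + 1) → ℤ) ∘ p.cycleRange := by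
  refine Fin.insertNth_eq_iff.mpr ⟨?_, ?_⟩
  · simp [Fin.cycleRange_self]
  · funext j
    simp [Fin.removeNth, Fin.cycleRange_succAbove]

lemma Den_cons_eq_sign_insertNth {M : ℕ} (p : Fin (M + 1)) (c : ℤ) (d : Fin M → ℤ) :
    Den (M + 1) (Fin.cons c d) =
      (-1) ^ (p : ℕ) * Den (M + 1) (Fin.insertNth p c d) := by
  have h1 : Den (M + 1) (Fin.insertNth p c d) =
      (-1) ^ (p : ℕ) * Den (M + 1) (Fin.cons c d) := by
    rw [insertNth_eq_cons_comp_cycleRange]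
    have : (Matrix.of fun (i j : Fin (M+1)) =>
        hh (((Fin.cons c d : Fin (M + 1) → ℤ) ∘ p.cycleRange) i + (j : ℕ)))
        = (Matrix.of fun (i j : Fin (M+1)) =>
            hh ((Fin.cons c d : Fin (M + 1) → ℤ) i + (j : ℕ))).submatrix p.cycleRange id := by
      ext i j; rfl
    rw [Den, this, Matrix.det_permute]
    rw [Fin.sign_cycleRange]
    rw [← Den]
    norm_cast
  rw [h1, ← mul_assoc, ← pow_add]
  rw [Even.neg_one_pow ⟨(p : ℕ), rfl⟩, one_mul]

/-! ### Block lists -/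

def blockList {k : ℕ} (g v : Fin k → ℕ) : List ℕ :=
  (List.ofFn fun j : Fin k => List.replicate (g j) (v j)).flatten

def offF {k : ℕ} (g : Fin k → ℕ) (j : ℕ) : ℕ :=
  ∑ x ∈ Finset.range j, if h : x < k then g ⟨x, h⟩ else 0

lemma offF_zero {k : ℕ} (g : Fin k → ℕ) : offF g 0 = 0 := by simp [offF]

lemma offF_succ {k : ℕ} (g : Fin k → ℕ) (j : ℕ) :
    offF g (j + 1) = offF g j + (if h : j < k then g ⟨j, h⟩ else 0) :=
  Finset.sum_range_succ _ j

lemma offF_succ_of_lt {k : ℕ} (g : Fin k → ℕ) {j : ℕ} (hj : j < k) :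
    offF g (j + 1) = offF g j + g ⟨j, hj⟩ := by rw [offF_succ, dif_pos hj]

lemma offF_shift {k : ℕ} (g : Fin (k + 1) → ℕ) (j : ℕ) :
    offF g (j + 1) = g 0 + offF (g ∘ Fin.succ) j := by
  have h1 : ∀ x : ℕ, (if h : x + 1 < k + 1 then g ⟨x + 1, h⟩ else 0)
      = (if h : x < k then (g ∘ Fin.succ) ⟨x, h⟩ else 0) := by
    intro x
    rcases Nat.lt_or_ge x k with hx | hx
    · rw [dif_pos (by omega : x + 1 < k + 1), dif_pos hx]
      rfl
    · rw [dif_neg (by omega), dif_neg (by omega)]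
  calc offF g (j + 1)
      = ∑ x ∈ Finset.range j, (if h : x + 1 < k + 1 then g ⟨x + 1, h⟩ else 0)
        + (if h : (0 : ℕ) < k + 1 then g ⟨0, h⟩ else 0) :=
        Finset.sum_range_succ' (fun x => if h : x < k + 1 then g ⟨x, h⟩ else 0) j
    _ = offF (g ∘ Fin.succ) j + g 0 := by
        rw [dif_pos (Nat.succ_pos k)]
        congr 1
        exact Finset.sum_congr rfl fun x _ => h1 x
    _ = g 0 + offF (g ∘ Fin.succ) j := Nat.add_comm _ _

lemma offF_mono {k : ℕ} (g : Fin k → ℕ) : Monotone (offF g) := by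
  intro a b hab
  exact Finset.sum_le_sum_of_subset (Finset.range_subset_range.mpr hab)

lemma offF_stable {k : ℕ} (g : Fin k → ℕ) {j : ℕ} (hj : k ≤ j) : offF g j = offF g k := by
  induction j with
  | zero =>
    have hk : k = 0 := Nat.le_zero.mp hj
    subst hk
    rfl
  | succ j ih =>
    rcases Nat.lt_or_ge j k with h | h
    · have : j + 1 = k := by omega
      rw [this]
    · rw [offF_succ, dif_neg (by omega), add_zero, ih h]

lemma blockList_length {k : ℕ} (g v : Fin k → ℕ) :
    (blockList g v).length = offF g k := by
  induction k with
  | zero => simp [blockList, offF]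
  | succ k ih =>
    rw [blockList, List.ofFn_succ, List.flatten_cons, List.length_append,
      List.length_replicate, offF_shift]
    congr 1
    exact ih (g ∘ Fin.succ) (v ∘ Fin.succ)

lemma blockList_getD {k : ℕ} (g v : Fin k → ℕ) (j : ℕ) (hj : j < k) (r : ℕ)
    (hr : r < g ⟨j, hj⟩) :
    (blockList g v).getD (offF g j + r) 0 = v ⟨j, hj⟩ := by
  induction k generalizing j with
  | zero => omega
  | succ k ih =>
    rw [blockList, List.ofFn_succ, List.flatten_cons]
    cases j with
    | zero =>
      rw [offF_zero, zero_add]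
      rw [List.getD_append _ _ _ _ (by simpa using hr)]
      rw [List.getD_eq_getElem _ _ (by simpa using hr)]
      simp
    | succ j =>
      have hj' : j < k := by omega
      rw [offF_shift, add_assoc]
      rw [List.getD_append_right _ _ _ _ (by simp)]
      rw [List.length_replicate, Nat.add_sub_cancel_left]
      have := ih (g ∘ Fin.succ) (v ∘ Fin.succ) j hj' hr
      rw [blockList] at this
      simpa [Function.comp] using this

lemma blockList_dec {k : ℕ} (g : Fin k → ℕ) (i : ℕ) (hi : i < offF g k) :
    ∃ (j : ℕ) (hj : j < k) (r : ℕ), r < g ⟨j, hj⟩ ∧ i = offF g j + r := by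
  induction k generalizing i with
  | zero => simp [offF] at hi
  | succ k ih =>
    rcases Nat.lt_or_ge i (g 0) with h | h
    · exact ⟨0, by omega, i, h, by rw [offF_zero, zero_add]⟩
    · have hi' : i - g 0 < offF (g ∘ Fin.succ) k := by
        have := offF_shift g k
        omega
      obtain ⟨j, hj, r, hr, hir⟩ := ih (g ∘ Fin.succ) (i - g 0) hi'
      refine ⟨j + 1, by omega, r, hr, ?_⟩
      rw [offF_shift]
      have : (g ∘ Fin.succ) ⟨j, hj⟩ = g ⟨j + 1, by omega⟩ := rfl
      omega

/-! ### Schur functions vs `Den` -/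

lemma schurL_eq (l : List ℕ) {M : ℕ} (hlen : l.length = M) :
    schurL l = Den M (fun i : Fin M => ((l.getD (i : ℕ) 0 : ℕ) : ℤ) - ((i : ℕ) : ℤ)) := by
  subst hlen
  rfl

lemma schurL_eq_pad (l : List ℕ) {M : ℕ} (hlen : l.length = M) :
    schurL l = Den (M + 1) (fun i : Fin (M + 1) => ((l.getD (i : ℕ) 0 : ℕ) : ℤ) - ((i : ℕ) : ℤ)) := by
  rw [Den_pad _ (by rw [List.getD_eq_default _ _ (by simp [hlen])]; simp), schurL_eq l hlen]
  rfl

/-! ### The modified partitions as block lists -/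

lemma plusMinus_eq_blockList {k : ℕ} (ξ m : Fin k → ℕ) (i : Fin (k + 1)) :
    plusMinusParts ξ m i = blockList
      (fun j => if (j : ℕ) < (i : ℕ) then m j else if (j : ℕ) = (i : ℕ) then m j - 1 else m j)
      (fun j => if (j : ℕ) < (i : ℕ) then ξ j + 1 else ξ j) := by
  unfold plusMinusParts blockList
  have h : (fun j : Fin k =>
      if (j : ℕ) < (i : ℕ) then List.replicate (m j) (ξ j + 1)
      else if (j : ℕ) = (i : ℕ) then List.replicate (m j - 1) (ξ j)
      else List.replicate (m j) (ξ j)) = fun j : Fin k =>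
        List.replicate (if (j : ℕ) < (i : ℕ) then m j else if (j : ℕ) = (i : ℕ) then m j - 1 else m j)
          (if (j : ℕ) < (i : ℕ) then ξ j + 1 else ξ j) := by
    funext j
    split_ifs with h1 h2 <;> simp_all
  rw [h]

lemma minusPlus_eq_blockList {k : ℕ} (ξ m : Fin k → ℕ) (i : Fin (k + 1)) :
    minusPlusParts ξ m i = blockList
      (fun j => if (j : ℕ) < (i : ℕ) then m j else if (j : ℕ) = (i : ℕ) then m j + 1 else m j)
      (fun j => if (j : ℕ) < (i : ℕ) then ξ j - 1 else ξ j) := by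
  unfold minusPlusParts blockList
  have h : (fun j : Fin k =>
      if (j : ℕ) < (i : ℕ) then List.replicate (m j) (ξ j - 1)
      else if (j : ℕ) = (i : ℕ) then List.replicate (m j + 1) (ξ j)
      else List.replicate (m j) (ξ j)) = fun j : Fin k =>
        List.replicate (if (j : ℕ) < (i : ℕ) then m j else if (j : ℕ) = (i : ℕ) then m j + 1 else m j)
          (if (j : ℕ) < (i : ℕ) then ξ j - 1 else ξ j) := by
    funext j
    split_ifs with h1 h2 <;> simp_all
  rw [h]

lemma partsOf_eq_blockList {k : ℕ} (ξ m : Fin k → ℕ) :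
    partsOf ξ m = blockList m ξ := rfl

lemma offF_congr_le {k : ℕ} {g₁ g₂ : Fin k → ℕ} {J : ℕ}
    (h : ∀ (x : ℕ) (hx : x < k), x < J → g₁ ⟨x, hx⟩ = g₂ ⟨x, hx⟩) :
    ∀ jj ≤ J, offF g₁ jj = offF g₂ jj := by
  intro jj hjj
  unfold offF
  refine Finset.sum_congr rfl fun x hx => ?_
  have hxj : x < jj := Finset.mem_range.mp hx
  rcases Nat.lt_or_ge x k with hxk | hxk
  · rw [dif_pos hxk, dif_pos hxk, h x hxk (by omega)]
  · rw [dif_neg (by omega), dif_neg (by omega)]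

lemma offF_shift_one {k : ℕ} {g₁ g₂ : Fin k → ℕ} {i0 : ℕ} (hi0 : i0 < k)
    (heq : ∀ (x : ℕ) (hx : x < k), x ≠ i0 → g₁ ⟨x, hx⟩ = g₂ ⟨x, hx⟩)
    (hdiff : g₁ ⟨i0, hi0⟩ + 1 = g₂ ⟨i0, hi0⟩) :
    ∀ jj, i0 < jj → offF g₁ jj + 1 = offF g₂ jj := by
  intro jj hjj
  induction jj with
  | zero => omega
  | succ jj ih =>
    rcases Nat.lt_or_ge i0 jj with h | h
    · have := ih h
      rw [offF_succ, offF_succ]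
      rcases Nat.lt_or_ge jj k with hjk | hjk
      · rw [dif_pos hjk, dif_pos hjk, heq jj hjk (by omega)]
        omega
      · rw [dif_neg (by omega), dif_neg (by omega)]
        omega
    · have hji : jj = i0 := by omega
      subst hji
      rw [offF_succ_of_lt g₁ hi0, offF_succ_of_lt g₂ hi0]
      have := offF_congr_le (g₁ := g₁) (g₂ := g₂) (J := jj)
        (fun x hx hxj => heq x hx (by omega)) jj le_rfl
      omega

/-- decomposition index is below `i` when the position is below `offF m i`. -/
lemma dec_lt_block {k : ℕ} (m : Fin k → ℕ) {j r i t : ℕ} (hj : j < k)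
    (ht : t = offF m j + r) (hti : t < offF m i) : j < i := by
  by_contra h
  have := offF_mono m (show i ≤ j by omega)
  omega

lemma dec_ge_block {k : ℕ} (m : Fin k → ℕ) {j r i t : ℕ} (hj : j < k)
    (hr : r < m ⟨j, hj⟩) (ht : t = offF m j + r) (hti : offF m i ≤ t) : i ≤ j := by
  by_contra h
  have h1 : offF m (j + 1) ≤ offF m i := offF_mono m (by omega)
  have h2 : offF m (j + 1) = offF m j + m ⟨j, hj⟩ := offF_succ_of_lt m hj
  omega

lemma val_mk' {k : ℕ} {j : ℕ} (hj : j < k) : ((⟨j, hj⟩ : Fin k) : ℕ) = j := rfl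

section ppmp

variable {k : ℕ} (ξ m : Fin k → ℕ) (i : Fin (k + 1))

lemma partsOf_getD {j r : ℕ} (hj : j < k) (hr : r < m ⟨j, hj⟩) :
    (partsOf ξ m).getD (offF m j + r) 0 = ξ ⟨j, hj⟩ :=
  blockList_getD m ξ j hj r hr

lemma pm_getD_lt {t : ℕ} (ht : t < offF m (i : ℕ)) :
    (plusMinusParts ξ m i).getD t 0 = (partsOf ξ m).getD t 0 + 1 := by
  have htk : t < offF m k := by
    have := offF_mono m (show (i : ℕ) ≤ k from Nat.lt_succ_iff.mp i.isLt)
    omega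
  obtain ⟨j, hj, r, hr, hdec⟩ := blockList_dec m t htk
  have hji : j < (i : ℕ) := dec_lt_block m hj hdec ht
  rw [partsOf_eq_blockList, hdec, blockList_getD m ξ j hj r hr]
  rw [plusMinus_eq_blockList]
  have hoff : offF (fun j => if (j : ℕ) < (i : ℕ) then m j else
      if (j : ℕ) = (i : ℕ) then m j - 1 else m j) j = offF m j := by
    refine offF_congr_le (J := (i : ℕ)) (fun x hx hxi => by simp [val_mk', hxi]) j (by omega)
  rw [← hoff]
  rw [blockList_getD _ _ j hj r (by simp only [val_mk']; simpa [hji] using hr)]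
  simp [val_mk', hji]

lemma pm_getD_ge (hm : ∀ j, 0 < m j) {t : ℕ} (hge : offF m (i : ℕ) ≤ t)
    (ht : t + 1 < offF m k) :
    (plusMinusParts ξ m i).getD t 0 = (partsOf ξ m).getD (t + 1) 0 := by
  obtain ⟨j, hj, r, hr, hdec⟩ := blockList_dec m (t + 1) ht
  have hij : (i : ℕ) ≤ j := dec_ge_block m hj hr hdec (by omega)
  have hik : (i : ℕ) < k := by omega
  rw [partsOf_eq_blockList, hdec, blockList_getD m ξ j hj r hr]
  rw [plusMinus_eq_blockList]
  set g' : Fin k → ℕ := fun j => if (j : ℕ) < (i : ℕ) then m j else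
      if (j : ℕ) = (i : ℕ) then m j - 1 else m j with hg'
  have hoffle : ∀ jj ≤ (i : ℕ), offF g' jj = offF m jj :=
    offF_congr_le (fun x hx hxi => by simp [hg', val_mk', hxi])
  have hoffgt : ∀ jj, (i : ℕ) < jj → offF g' jj + 1 = offF m jj := by
    refine offF_shift_one hik (fun x hx hxi => ?_) ?_
    · simp only [hg', val_mk']
      split_ifs with h1 h2 <;> omega
    · have := hm ⟨(i : ℕ), hik⟩
      simp only [hg', val_mk']
      simp
      omega
  rcases Nat.eq_or_lt_of_le hij with hji | hji
  · -- j = i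
    have hoe : offF m (i : ℕ) = offF m j := by rw [hji]
    have hgj : offF g' j = offF m j := hoffle j (by omega)
    have hr1 : 1 ≤ r := by omega
    have ht' : t = offF g' j + (r - 1) := by omega
    rw [ht', blockList_getD g' _ j hj (r - 1)
      (by simp only [hg', val_mk']; split_ifs <;> omega)]
    simp only [val_mk']
    split_ifs <;> omega
  · -- j > i
    have ht' : t = offF g' j + r := by
      have := hoffgt j hji
      omega
    rw [ht', blockList_getD g' _ j hj r
      (by simp only [hg', val_mk']; split_ifs <;> omega)]
    simp only [val_mk']
    split_ifs <;> omega

lemma pm_length (hm : ∀ j, 0 < m j) :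
    (plusMinusParts ξ m i).length =
      if (i : ℕ) < k then offF m k - 1 else offF m k := by
  rw [plusMinus_eq_blockList, blockList_length]
  set g' : Fin k → ℕ := fun j => if (j : ℕ) < (i : ℕ) then m j else
      if (j : ℕ) = (i : ℕ) then m j - 1 else m j with hg'
  rcases Nat.lt_or_ge (i : ℕ) k with hik | hik
  · rw [if_pos hik]
    have hoffgt : offF g' k + 1 = offF m k := by
      refine offF_shift_one hik (fun x hx hxi => ?_) ?_ k hik
      · simp only [hg', val_mk']; split_ifs <;> omega
      · have := hm ⟨(i : ℕ), hik⟩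
        simp only [hg', val_mk']
        simp
        omega
    omega
  · rw [if_neg (by omega)]
    exact offF_congr_le (J := (i : ℕ)) (fun x hx hxi => by simp [hg', val_mk', hxi]) k (by omega)

lemma mp_getD_lt (hξpos : ∀ j, 0 < ξ j) {t : ℕ} (ht : t < offF m (i : ℕ)) :
    (minusPlusParts ξ m i).getD t 0 + 1 = (partsOf ξ m).getD t 0 := by
  have htk : t < offF m k := by
    have := offF_mono m (show (i : ℕ) ≤ k from Nat.lt_succ_iff.mp i.isLt)
    omega
  obtain ⟨j, hj, r, hr, hdec⟩ := blockList_dec m t htk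
  have hji : j < (i : ℕ) := dec_lt_block m hj hdec ht
  rw [partsOf_eq_blockList, hdec, blockList_getD m ξ j hj r hr]
  rw [minusPlus_eq_blockList]
  have hoff : offF (fun j => if (j : ℕ) < (i : ℕ) then m j else
      if (j : ℕ) = (i : ℕ) then m j + 1 else m j) j = offF m j := by
    refine offF_congr_le (J := (i : ℕ)) (fun x hx hxi => by simp [val_mk', hxi]) j (by omega)
  rw [← hoff]
  rw [blockList_getD _ _ j hj r (by simp only [val_mk']; simpa [hji] using hr)]
  have := hξpos ⟨j, hj⟩
  simp only [val_mk', if_pos hji]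
  omega

lemma mp_getD_corner (hm : ∀ j, 0 < m j) (hik : (i : ℕ) < k) :
    (minusPlusParts ξ m i).getD (offF m (i : ℕ)) 0
      = (partsOf ξ m).getD (offF m (i : ℕ)) 0 := by
  have hmi := hm ⟨(i : ℕ), hik⟩
  have h1 : (partsOf ξ m).getD (offF m (i : ℕ) + 0) 0 = ξ ⟨(i : ℕ), hik⟩ :=
    partsOf_getD ξ m hik (by omega)
  rw [minusPlus_eq_blockList]
  set g'' : Fin k → ℕ := fun j => if (j : ℕ) < (i : ℕ) then m j else
      if (j : ℕ) = (i : ℕ) then m j + 1 else m j with hg''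
  have hoff : offF g'' (i : ℕ) = offF m (i : ℕ) :=
    offF_congr_le (fun x hx hxi => by simp [hg'', val_mk', hxi]) _ le_rfl
  have h2 := blockList_getD g'' (fun j => if (j : ℕ) < (i : ℕ) then ξ j - 1 else ξ j)
    (i : ℕ) hik 0 (show 0 < g'' ⟨(i : ℕ), hik⟩ by
      simp only [hg'', val_mk']; split_ifs <;> omega)
  rw [hoff] at h2
  rw [add_zero] at h1 h2
  rw [h1, h2]
  simp [val_mk']

lemma mp_getD_ge {t : ℕ} (hge : offF m (i : ℕ) ≤ t) (ht : t < offF m k) :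
    (minusPlusParts ξ m i).getD (t + 1) 0 = (partsOf ξ m).getD t 0 := by
  obtain ⟨j, hj, r, hr, hdec⟩ := blockList_dec m t ht
  have hij : (i : ℕ) ≤ j := dec_ge_block m hj hr hdec hge
  rw [partsOf_eq_blockList, hdec, blockList_getD m ξ j hj r hr]
  rw [minusPlus_eq_blockList]
  set g'' : Fin k → ℕ := fun j => if (j : ℕ) < (i : ℕ) then m j else
      if (j : ℕ) = (i : ℕ) then m j + 1 else m j with hg''
  have hoffle : ∀ jj ≤ (i : ℕ), offF g'' jj = offF m jj :=
    offF_congr_le (fun x hx hxi => by simp [hg'', val_mk', hxi])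
  rcases Nat.eq_or_lt_of_le hij with hji | hji
  · -- j = i
    have hgj : offF g'' j = offF m j := hoffle j (by omega)
    have ht' : offF m j + r + 1 = offF g'' j + (r + 1) := by omega
    rw [ht', blockList_getD g'' _ j hj (r + 1)
      (by simp only [hg'', val_mk']; split_ifs <;> omega)]
    simp only [val_mk']
    split_ifs <;> omega
  · -- j > i
    have hik : (i : ℕ) < k := by omega
    have hoffgt : ∀ jj, (i : ℕ) < jj → offF m jj + 1 = offF g'' jj := by
      refine offF_shift_one hik (fun x hx hxi => ?_) ?_
      · simp only [hg'', val_mk']; split_ifs <;> omega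
      · simp only [hg'', val_mk']
        simp
    have ht' : offF m j + r + 1 = offF g'' j + r := by
      have := hoffgt j hji
      omega
    rw [ht', blockList_getD g'' _ j hj r
      (by simp only [hg'', val_mk']; split_ifs <;> omega)]
    simp only [val_mk']
    split_ifs <;> omega

lemma mp_length :
    (minusPlusParts ξ m i).length =
      if (i : ℕ) < k then offF m k + 1 else offF m k := by
  rw [minusPlus_eq_blockList, blockList_length]
  set g'' : Fin k → ℕ := fun j => if (j : ℕ) < (i : ℕ) then m j else
      if (j : ℕ) = (i : ℕ) then m j + 1 else m j with hg''
  rcases Nat.lt_or_ge (i : ℕ) k with hik | hik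
  · rw [if_pos hik]
    have hoffgt : offF m k + 1 = offF g'' k := by
      refine offF_shift_one hik (fun x hx hxi => ?_) ?_ k hik
      · simp only [hg'', val_mk']; split_ifs <;> omega
      · simp only [hg'', val_mk']
        simp
    omega
  · rw [if_neg (by omega)]
    exact offF_congr_le (J := (i : ℕ)) (fun x hx hxi => by simp [hg'', val_mk', hxi]) k (by omega)

end ppmp

/-- Inner-corner bilinear identity:
`s_λ · s_λ = Σ_{α ∈ 𝔠_λ} s_{λ⁺₋(α)} · s_{λ⁻₊(α)}`, the sum running over the
`k+1` inner corners of `λ = (ξ₁^{m₁}, …, ξ_k^{m_k})`. -/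
theorem schur_square_inner_corners (k : ℕ) (hk : 1 ≤ k) (ξ m : Fin k → ℕ)
    (hξ : StrictAnti ξ) (hξpos : ∀ j, 0 < ξ j) (hm : ∀ j, 0 < m j) :
    schurL (partsOf ξ m) * schurL (partsOf ξ m) =
      ∑ i : Fin (k + 1), schurL (plusMinusParts ξ m i) * schurL (minusPlusParts ξ m i) := by
  classical
  obtain ⟨m', hn⟩ : ∃ m', offF m k = m' + 1 := by
    have h1 : offF m (0 + 1) = offF m 0 + m ⟨0, hk⟩ := offF_succ_of_lt m hk
    simp only [Nat.zero_add] at h1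
    have h2 := offF_mono m hk
    have h3 := hm ⟨0, hk⟩
    have h0 := offF_zero m
    exact ⟨offF m k - 1, by omega⟩
  have hlenL : (partsOf ξ m).length = m' + 1 := by
    rw [partsOf_eq_blockList, blockList_length, hn]
  set b : Fin (m' + 2) → ℤ :=
    fun t => (((partsOf ξ m).getD (t : ℕ) 0 : ℕ) : ℤ) - ((t : ℕ) : ℤ) with hb
  set d : Fin (m' + 1) → ℤ :=
    fun s => (((partsOf ξ m).getD (s : ℕ) 0 : ℕ) : ℤ) - ((s : ℕ) : ℤ) - 1 with hd
  -- s_λ as the two basic determinants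
  have hS1 : schurL (partsOf ξ m) = Den (m' + 1) (fun s => d s + 1) := by
    rw [schurL_eq _ hlenL]
    congr 1
    funext s
    simp only [hd]
    ring
  have hblast : b (Fin.last (m' + 1)) = -(((m' + 1 : ℕ) : ℤ)) := by
    simp only [hb]
    rw [List.getD_eq_default _ _ (by simp [hlenL])]
    simp
  have hS2 : Den (m' + 2) b = schurL (partsOf ξ m) := by
    rw [Den_pad b hblast, hS1]
    congr 1
    funext s
    simp only [hb, hd, Function.comp_apply, Fin.coe_castSucc]
    ring
  -- corners
  have hcorlt : ∀ i : Fin (k + 1), offF m (i : ℕ) < m' + 2 := by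
    intro i
    have := offF_mono m (Nat.lt_succ_iff.mp i.isLt)
    omega
  set cor : Fin (k + 1) → Fin (m' + 2) := fun i => ⟨offF m (i : ℕ), hcorlt i⟩ with hcor
  have hsmono : ∀ a c : ℕ, a < c → c ≤ k → offF m a < offF m c := by
    intro a c hac hck
    have h1 : offF m (a + 1) = offF m a + m ⟨a, by omega⟩ := offF_succ_of_lt m (by omega)
    have h2 := offF_mono m (show a + 1 ≤ c by omega)
    have h3 := hm ⟨a, by omega⟩
    omega
  have hinj : Function.Injective cor := by
    intro a c hac
    have hv : offF m (a : ℕ) = offF m (c : ℕ) := congrArg Fin.val hac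
    by_contra hne
    have hne' : (a : ℕ) ≠ (c : ℕ) := fun h => hne (Fin.ext h)
    rcases Nat.lt_or_ge (a : ℕ) (c : ℕ) with h | h
    · have := hsmono _ _ h (Nat.lt_succ_iff.mp c.isLt); omega
    · have := hsmono _ _ (by omega : (c : ℕ) < (a : ℕ)) (Nat.lt_succ_iff.mp a.isLt); omega
  -- vanishing of non-corner terms
  have hvanish : ∀ t : Fin (m' + 2), t ∉ Finset.image cor Finset.univ →
      Den (m' + 2) (Fin.cons (b t) d) = 0 := by
    intro t htno
    have htn : (t : ℕ) ≠ m' + 1 := by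
      intro h
      exact htno (Finset.mem_image.mpr ⟨Fin.last k, Finset.mem_univ _,
        Fin.ext (by simp [hcor, Fin.val_last, hn, h, val_mk'])⟩)
    have htlt : (t : ℕ) < offF m k := by have := t.isLt; omega
    obtain ⟨j, hj, r, hr, hdec⟩ := blockList_dec m (t : ℕ) htlt
    have hrpos : r ≠ 0 := by
      intro h0
      refine htno (Finset.mem_image.mpr ⟨⟨j, by omega⟩, Finset.mem_univ _, Fin.ext ?_⟩)
      simp only [hcor, val_mk']
      omega
    have hi0 : (t : ℕ) - 1 < m' + 1 := by omega
    apply Den_dup _ (Fin.succ_ne_zero (⟨(t : ℕ) - 1, hi0⟩ : Fin (m' + 1))).symm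
      (i := (0 : Fin (m' + 2))) (j := (⟨(t : ℕ) - 1, hi0⟩ : Fin (m' + 1)).succ)
    rw [Fin.cons_zero, Fin.cons_succ]
    have hv1 : (partsOf ξ m).getD (t : ℕ) 0 = ξ ⟨j, hj⟩ := by
      rw [hdec]; exact partsOf_getD ξ m hj hr
    have hv2 : (partsOf ξ m).getD ((t : ℕ) - 1) 0 = ξ ⟨j, hj⟩ := by
      have h' : (t : ℕ) - 1 = offF m j + (r - 1) := by omega
      rw [h']; exact partsOf_getD ξ m hj (by omega)
    simp only [hb, hd, val_mk']
    rw [hv1, hv2]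
    have ht1 : 1 ≤ (t : ℕ) := by omega
    push_cast [Nat.cast_sub ht1]
    ring
  -- value of succAbove for the corner embedding
  have hsa : ∀ (i : Fin (k + 1)) (s : Fin (m' + 1)),
      (((cor i).succAbove s : Fin (m' + 2)) : ℕ)
        = if (s : ℕ) < offF m (i : ℕ) then (s : ℕ) else (s : ℕ) + 1 := by
    intro i s
    rcases Nat.lt_or_ge (s : ℕ) (offF m (i : ℕ)) with h | h
    · rw [if_pos h, Fin.succAbove_of_castSucc_lt _ _ (by
        simp only [Fin.lt_def, Fin.coe_castSucc, hcor, val_mk']; exact h)]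
      simp
    · rw [if_neg (by omega), Fin.succAbove_of_le_castSucc _ _ (by
        simp only [Fin.le_def, Fin.coe_castSucc, hcor, val_mk']; exact h)]
      simp
  -- (a) the plusMinus determinant
  have haA : ∀ i : Fin (k + 1),
      Den (m' + 1) (fun s => b ((cor i).succAbove s) + 1)
        = schurL (plusMinusParts ξ m i) := by
    intro i
    rcases Nat.lt_or_ge (i : ℕ) k with hik | hik
    · -- i < k : the list has length m', pad needed
      have hoi : offF m (i : ℕ) < m' + 1 := by
        have := hsmono (i : ℕ) k hik le_rfl
        omega
      have hlenpp : (plusMinusParts ξ m i).length = m' := by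
        rw [pm_length ξ m i hm, if_pos hik]
        omega
      rw [schurL_eq_pad _ hlenpp]
      congr 1
      funext s
      simp only [hb]
      rcases Nat.lt_or_ge (s : ℕ) (offF m (i : ℕ)) with hs | hs
      · have hv : (((cor i).succAbove s : Fin (m' + 2)) : ℕ) = (s : ℕ) := by
          rw [hsa i s, if_pos hs]
        rw [hv, pm_getD_lt ξ m i hs]
        push_cast
        ring
      · have hv : (((cor i).succAbove s : Fin (m' + 2)) : ℕ) = (s : ℕ) + 1 := by
          rw [hsa i s, if_neg (by omega)]
        rw [hv]
        rcases Nat.lt_or_ge ((s : ℕ) + 1) (offF m k) with hs2 | hs2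
        · rw [← pm_getD_ge ξ m i hm hs hs2]
          push_cast
          ring
        · have hs1 : (s : ℕ) = m' := by have := s.isLt; omega
          rw [List.getD_eq_default _ _ (by omega),
            List.getD_eq_default ((plusMinusParts ξ m i)) _ (by omega)]
          push_cast
          ring
    · -- i = k : the list has length m' + 1
      have hikk : (i : ℕ) = k := by have := i.isLt; omega
      have hlenpp : (plusMinusParts ξ m i).length = m' + 1 := by
        rw [pm_length ξ m i hm, if_neg (by omega), hn]
      rw [schurL_eq _ hlenpp]
      congr 1
      funext s
      simp only [hb]
      have hs : (s : ℕ) < offF m (i : ℕ) := by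
        rw [hikk, hn]
        exact s.isLt
      have hv : (((cor i).succAbove s : Fin (m' + 2)) : ℕ) = (s : ℕ) := by
        rw [hsa i s, if_pos hs]
      rw [hv, pm_getD_lt ξ m i hs]
      push_cast
      ring
  -- (b) the minusPlus determinant
  have habB : ∀ i : Fin (k + 1),
      Den (m' + 2) (Fin.cons (b (cor i)) d)
        = (-1) ^ (offF m (i : ℕ)) * schurL (minusPlusParts ξ m i) := by
    intro i
    rw [Den_cons_eq_sign_insertNth (cor i) (b (cor i)) d]
    have hcv : ((cor i : Fin (m' + 2)) : ℕ) = offF m (i : ℕ) := rfl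
    rw [hcv]
    congr 1
    have hins : Fin.insertNth (cor i) (b (cor i)) d
        = fun t : Fin (m' + 2) =>
            (((minusPlusParts ξ m i).getD (t : ℕ) 0 : ℕ) : ℤ) - ((t : ℕ) : ℤ) := by
      rw [Fin.insertNth_eq_iff]
      constructor
      · -- the corner value
        simp only [hb, hcv]
        rcases Nat.lt_or_ge (i : ℕ) k with hik | hik
        · rw [mp_getD_corner ξ m i hm hik]
        · have hikk : (i : ℕ) = k := by have := i.isLt; omega
          have hoik : offF m (i : ℕ) = m' + 1 := by rw [hikk, hn]
          have hmpl : (minusPlusParts ξ m i).length = m' + 1 := by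
            rw [mp_length ξ m i, if_neg (by omega), hn]
          rw [List.getD_eq_default _ _ (by omega),
            List.getD_eq_default ((minusPlusParts ξ m i)) _ (by omega)]
      · -- the other rows
        funext s
        simp only [Fin.removeNth, hd]
        rcases Nat.lt_or_ge (s : ℕ) (offF m (i : ℕ)) with hs | hs
        · have hv : (((cor i).succAbove s : Fin (m' + 2)) : ℕ) = (s : ℕ) := by
            rw [hsa i s, if_pos hs]
          rw [hv, ← mp_getD_lt ξ m i hξpos hs]
          push_cast
          ring
        · have hv : (((cor i).succAbove s : Fin (m' + 2)) : ℕ) = (s : ℕ) + 1 := by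
            rw [hsa i s, if_neg (by omega)]
          rw [hv]
          have hsk : (s : ℕ) < offF m k := by rw [hn]; exact s.isLt
          rw [mp_getD_ge ξ m i hs hsk]
          push_cast
          ring
    rw [hins]
    rcases Nat.lt_or_ge (i : ℕ) k with hik | hik
    · have hmpl : (minusPlusParts ξ m i).length = m' + 2 := by
        rw [mp_length ξ m i, if_pos hik, hn]
      rw [schurL_eq _ hmpl]
    · have hmpl : (minusPlusParts ξ m i).length = m' + 1 := by
        rw [mp_length ξ m i, if_neg (by omega), hn]
      rw [schurL_eq_pad _ hmpl]
  -- each corner term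
  have hcorner : ∀ i : Fin (k + 1),
      (-1) ^ ((cor i : Fin (m' + 2)) : ℕ) *
        Den (m' + 1) (fun s => b ((cor i).succAbove s) + 1) *
        Den (m' + 2) (Fin.cons (b (cor i)) d)
      = schurL (plusMinusParts ξ m i) * schurL (minusPlusParts ξ m i) := by
    intro i
    have hcv : ((cor i : Fin (m' + 2)) : ℕ) = offF m (i : ℕ) := rfl
    rw [hcv, haA i, habB i]
    have hsq : ((-1 : MvPolynomial ℕ ℤ)) ^ (offF m (i : ℕ)) *
        (-1) ^ (offF m (i : ℕ)) = 1 := by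
      rw [← pow_add]
      exact Even.neg_one_pow ⟨offF m (i : ℕ), rfl⟩
    calc (-1) ^ (offF m (i : ℕ)) * schurL (plusMinusParts ξ m i) *
          ((-1) ^ (offF m (i : ℕ)) * schurL (minusPlusParts ξ m i))
        = ((-1) ^ (offF m (i : ℕ)) * (-1) ^ (offF m (i : ℕ))) *
            (schurL (plusMinusParts ξ m i) * schurL (minusPlusParts ξ m i)) := by ring
      _ = schurL (plusMinusParts ξ m i) * schurL (minusPlusParts ξ m i) := by
          rw [hsq, one_mul]
  -- the sum over all rows reduces to the corner sum
  have hsum : ∑ t : Fin (m' + 2), (-1) ^ (t : ℕ) *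
        Den (m' + 1) (fun s => b (t.succAbove s) + 1) *
        Den (m' + 2) (Fin.cons (b t) d)
      = ∑ i : Fin (k + 1),
          schurL (plusMinusParts ξ m i) * schurL (minusPlusParts ξ m i) := by
    rw [← Finset.sum_subset (Finset.subset_univ (Finset.image cor Finset.univ))
      (fun t _ htn => by rw [hvanish t htn, mul_zero])]
    rw [Finset.sum_image (fun a _ c _ h => hinj h)]
    exact Finset.sum_congr rfl fun i _ => hcorner i
  calc schurL (partsOf ξ m) * schurL (partsOf ξ m)
      = Den (m' + 1) (fun s => d s + 1) * Den (m' + 2) b := by rw [← hS1, hS2]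
    _ = ∑ t : Fin (m' + 2), (-1) ^ (t : ℕ) *
          Den (m' + 1) (fun s => b (t.succAbove s) + 1) *
          Den (m' + 2) (Fin.cons (b t) d) := (key_identity b d).symm
    _ = ∑ i : Fin (k + 1),
          schurL (plusMinusParts ξ m i) * schurL (minusPlusParts ξ m i) := hsum
end
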